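/- arXiv:q-alg/9612027 — 3 statements merged into one kernel-verified Lean document; each statement's English description precedes it below -/
import Mathlib

section
/- Let n ∈ ℕ, let F ⊆ ℕ×ℕ be finite, and let f_{ij} ∈ R for (i,j) ∈ F. Set T = Σ_{(i,j)∈F} M_{f_{ij}} ∘ D_x^i ∘ D_y^j. Then T(P) = 0 for every P ∈ 𝒯ₙ if and only if f_{ij} = 0 for every (i,j) ∈ F with i + j ≤ n. -/
noncomputable section

open MvPolynomial

/-- The bivariate polynomial ring `R = ℂ[x,y]`. -/
abbrev R2 : Type := MvPolynomial (Fin 2) ℂ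

/-- The variable `x`. -/
def Xv : R2 := X 0

/-- The variable `y`. -/
def Yv : R2 := X 1

/-- The partial derivative `∂_x` as a `ℂ`-linear endomorphism. -/
def Dx : Module.End ℂ R2 := (pderiv (0 : Fin 2)).toLinearMap

/-- The partial derivative `∂_y` as a `ℂ`-linear endomorphism. -/
def Dy : Module.End ℂ R2 := (pderiv (1 : Fin 2)).toLinearMap

/-- Multiplication by `f` as an endomorphism. -/
def Mf (f : R2) : Module.End ℂ R2 := LinearMap.mulLeft ℂ f

/-- All compositions (products) of at most `k` elements of `S`; the empty
composition is the identity. -/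
def prodsLE (k : ℕ) (S : Set (Module.End ℂ R2)) : Set (Module.End ℂ R2) :=
  {T | ∃ l : List (Module.End ℂ R2), l.length ≤ k ∧ (∀ a ∈ l, a ∈ S) ∧ l.prod = T}

/-- The rectangular module `ℛ_{n,m}`. -/
def Rmod (n m : ℕ) : Submodule ℂ R2 :=
  Submodule.span ℂ {P : R2 | ∃ i j : ℕ, i ≤ n ∧ j ≤ m ∧ P = Xv ^ i * Yv ^ j}

/-- The triangular module `𝒯ₙ`. -/
def Tmod (n : ℕ) : Submodule ℂ R2 :=
  Submodule.span ℂ {P : R2 | ∃ i j : ℕ, i + j ≤ n ∧ P = Xv ^ i * Yv ^ j}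

/-- The staircase module `𝒮^r_{p,q}`. -/
def Smod (r p q : ℕ) : Submodule ℂ R2 :=
  Submodule.span ℂ {P : R2 | ∃ i j : ℕ, i + r * j ≤ p ∧ j ≤ q ∧ P = Xv ^ i * Yv ^ j}

/-- An endomorphism has nonpositive `y`-degree if it maps each monomial `xᵃyᵇ`
into the span of the monomials `x^c y^e` with `e ≤ b`. -/
def NonposY (T : Module.End ℂ R2) : Prop :=
  ∀ a b : ℕ, T (Xv ^ a * Yv ^ b) ∈
    Submodule.span ℂ {P : R2 | ∃ c e : ℕ, e ≤ b ∧ P = Xv ^ c * Yv ^ e}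


lemma dy_apply (a c : ℕ) : Dy (Xv ^ a * Yv ^ c) = (c : ℂ) • (Xv ^ a * Yv ^ (c - 1)) := by
  simp [Dy, Xv, Yv, pderiv_mul, pderiv_pow, pderiv_X_self,
    pderiv_X_of_ne (show (0:Fin 2) ≠ 1 by decide), smul_eq_C_mul]
  ring

lemma dx_apply (a c : ℕ) : Dx (Xv ^ a * Yv ^ c) = (a : ℂ) • (Xv ^ (a - 1) * Yv ^ c) := by
  simp [Dx, Xv, Yv, pderiv_mul, pderiv_pow, pderiv_X_self,
    pderiv_X_of_ne (show (1:Fin 2) ≠ 0 by decide), smul_eq_C_mul]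
  ring

lemma dy_pow (j a b : ℕ) : (Dy ^ j) (Xv ^ a * Yv ^ b) =
    ((b.descFactorial j : ℕ) : ℂ) • (Xv ^ a * Yv ^ (b - j)) := by
  induction j with
  | zero => simp
  | succ j ih =>
    rw [pow_succ', Module.End.mul_apply, ih, map_smul, dy_apply, smul_smul,
      Nat.descFactorial_succ]
    push_cast
    rw [Nat.sub_sub]
    ring

lemma dx_pow (i a b : ℕ) : (Dx ^ i) (Xv ^ a * Yv ^ b) =
    ((a.descFactorial i : ℕ) : ℂ) • (Xv ^ (a - i) * Yv ^ b) := by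
  induction i with
  | zero => simp
  | succ i ih =>
    rw [pow_succ', Module.End.mul_apply, ih, map_smul, dx_apply, smul_smul,
      Nat.descFactorial_succ]
    push_cast
    rw [Nat.sub_sub]
    ring

lemma T_term (g : R2) (i j a b : ℕ) :
    (Mf g * Dx ^ i * Dy ^ j) (Xv ^ a * Yv ^ b) =
      ((a.descFactorial i * b.descFactorial j : ℕ) : ℂ) •
        (g * (Xv ^ (a - i) * Yv ^ (b - j))) := by
  rw [Module.End.mul_apply, Module.End.mul_apply, dy_pow, map_smul, dx_pow, map_smul,
    map_smul, smul_smul, Mf, LinearMap.mulLeft_apply]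
  push_cast
  rw [mul_comm ((b.descFactorial j : ℂ))]

lemma mono_mem_Tmod {n a b : ℕ} (h : a + b ≤ n) : Xv ^ a * Yv ^ b ∈ Tmod n :=
  Submodule.subset_span ⟨a, b, h, rfl⟩

theorem stmt3 (n : ℕ) (F : Finset (ℕ × ℕ)) (f : ℕ × ℕ → R2) :
    (∀ P ∈ Tmod n, (∑ ij ∈ F, Mf (f ij) * Dx ^ ij.1 * Dy ^ ij.2) P = 0) ↔
      ∀ ij ∈ F, ij.1 + ij.2 ≤ n → f ij = 0 := by
  constructor
  · intro h
    have key : ∀ s : ℕ, ∀ ab ∈ F, ab.1 + ab.2 = s → s ≤ n → f ab = 0 := by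
      intro s
      induction s using Nat.strong_induction_on with
      | _ s ih =>
        rintro ⟨a, b⟩ hab hs hsn
        simp only at hs
        subst hs
        have h0 := h (Xv ^ a * Yv ^ b) (mono_mem_Tmod hsn)
        rw [LinearMap.sum_apply] at h0
        simp only [T_term] at h0
        rw [Finset.sum_eq_single_of_mem (a, b) hab ?_] at h0
        · have hne : ((a.factorial * b.factorial : ℕ) : ℂ) ≠ 0 := by
            simp [Nat.factorial_ne_zero]
          simp only [Nat.descFactorial_self, Nat.sub_self, pow_zero, mul_one] at h0
          rcases smul_eq_zero.mp h0 with h0 | h0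
          · exact absurd h0 hne
          · exact h0
        · rintro ⟨i, j⟩ hij hne
          by_cases hd : i ≤ a ∧ j ≤ b
          · obtain ⟨hd1, hd2⟩ := hd
            have hlt : i + j < a + b := by
              rcases Nat.lt_or_ge (i + j) (a + b) with h' | h'
              · exact h'
              · exfalso; apply hne; have : i = a ∧ j = b := by omega
                simp [this.1, this.2]
            rw [ih _ hlt (i, j) hij rfl (le_trans hlt.le hsn)]
            simp
          · have hz : a.descFactorial i * b.descFactorial j = 0 := by
              rcases not_and_or.mp hd with h' | h'
              · exact mul_eq_zero_of_left (Nat.descFactorial_eq_zero_iff_lt.mpr (by omega)) _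
              · exact mul_eq_zero_of_right _ (Nat.descFactorial_eq_zero_iff_lt.mpr (by omega))
            simp [hz]
    intro ij hij hn
    exact key (ij.1 + ij.2) ij hij rfl hn
  · intro h P hP
    induction hP using Submodule.span_induction with
    | mem P hP =>
      obtain ⟨a, b, hab, rfl⟩ := hP
      rw [LinearMap.sum_apply]
      apply Finset.sum_eq_zero
      rintro ⟨i, j⟩ hij
      rw [T_term]
      by_cases hn : i + j ≤ n
      · rw [h (i, j) hij hn]; simp
      · have hz : a.descFactorial i * b.descFactorial j = 0 := by
          have : a < i ∨ b < j := by omega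
          rcases this with h' | h'
          · exact mul_eq_zero_of_left (Nat.descFactorial_eq_zero_iff_lt.mpr h') _
          · exact mul_eq_zero_of_right _ (Nat.descFactorial_eq_zero_iff_lt.mpr h')
        simp [hz]
    | zero => simp
    | add _ _ _ _ ha hb => rw [map_add, ha, hb, add_zero]
    | smul c _ _ hx => rw [map_smul, hx, smul_zero]
end
end

section
/- Let n, m, k, l ∈ ℕ with k ≤ n and l ≤ m. Let f_{ij} ∈ R for 0 ≤ i ≤ k, 0 ≤ j ≤ l, and set T = Σ_{i≤k, j≤l} M_{f_{ij}} ∘ D_x^i ∘ D_y^j. If T preserves ℛ_{n,m}, then T lies in the ℂ-linear span of the operators A∘B, where A ranges over compositions of at most k elements of {J⁺, J⁻, J⁰} and B ranges over compositions of at most l elements of {K⁺, K⁻, K⁰} (empty compositions being the identity). -/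
noncomputable section

open MvPolynomial

/-- `J⁺ = M_{x²}∘D_x − n·M_x`. -/
def Jp (n : ℕ) : Module.End ℂ R2 := Mf (Xv ^ 2) * Dx - (n : ℂ) • Mf Xv

/-- `J⁻ = D_x`. -/
def Jm : Module.End ℂ R2 := Dx

/-- `J⁰ = M_x∘D_x − (n/2)·id`. -/
def J0 (n : ℕ) : Module.End ℂ R2 := Mf Xv * Dx - ((n : ℂ) / 2) • 1

/-- `K⁺ = M_{y²}∘D_y − m·M_y`. -/
def Kp (m : ℕ) : Module.End ℂ R2 := Mf (Yv ^ 2) * Dy - (m : ℂ) • Mf Yv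

/-- `K⁻ = D_y`. -/
def Km : Module.End ℂ R2 := Dy

/-- `K⁰ = M_y∘D_y − (m/2)·id`. -/
def K0 (m : ℕ) : Module.End ℂ R2 := Mf Yv * Dy - ((m : ℂ) / 2) • 1


namespace Stmt5

/-- exponent encoding -/
def enc (p q : ℕ) : Fin 2 →₀ ℕ := Finsupp.single 0 p + Finsupp.single 1 q

@[simp] lemma enc_apply0 (p q : ℕ) : enc p q 0 = p := by simp [enc]
@[simp] lemma enc_apply1 (p q : ℕ) : enc p q 1 = q := by simp [enc]

lemma enc_surj (e : Fin 2 →₀ ℕ) : enc (e 0) (e 1) = e := by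
  ext i
  fin_cases i <;> simp [enc]

lemma enc_inj {p q p' q' : ℕ} (h : enc p q = enc p' q') : p = p' ∧ q = q' := by
  constructor
  · have := congrArg (fun e => e 0) h; simpa using this
  · have := congrArg (fun e => e 1) h; simpa using this

/-- the monomial x^p y^q -/
def mon (p q : ℕ) : R2 := Xv ^ p * Yv ^ q

lemma mon_eq_monomial (p q : ℕ) : mon p q = monomial (enc p q) 1 := by
  simp [mon, Xv, Yv, enc, X_pow_eq_monomial, monomial_mul]

@[simp] lemma coeff_mon (e : Fin 2 →₀ ℕ) (p q : ℕ) :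
    coeff e (mon p q) = if enc p q = e then 1 else 0 := by
  rw [mon_eq_monomial, coeff_monomial]

/-- complex falling factorial value: p(p-1)...(p-i+1) -/
def ff (i p : ℕ) : ℂ := ∏ u ∈ Finset.range i, ((p : ℂ) - u)

@[simp] lemma ff_zero (p : ℕ) : ff 0 p = 1 := by simp [ff]

lemma ff_eq_zero_of_lt {i p : ℕ} (h : p < i) : ff i p = 0 := by
  apply Finset.prod_eq_zero (Finset.mem_range.2 h)
  simp

lemma ff_succ (i p : ℕ) : ff (i + 1) (p + 1) = (p + 1 : ℂ) * ff i p := by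
  rw [ff, ff, Finset.prod_range_succ']
  have h : ∀ u ∈ Finset.range i, (((p+1 : ℕ)) : ℂ) - ((u+1 : ℕ) : ℂ) = (p : ℂ) - u := by
    intro u hu; push_cast; ring
  rw [Finset.prod_congr rfl h]
  push_cast
  ring

lemma Dx_mon (p q : ℕ) : Dx (mon p q) = (p : ℂ) • mon (p - 1) q := by
  rcases p with - | p
  · simp [mon, Dx, Xv, Yv, pderiv_pow, pderiv_X_of_ne]
  · rw [mon_eq_monomial, mon_eq_monomial]
    show pderiv 0 _ = _
    rw [pderiv_monomial]
    have h : enc (p+1) q - Finsupp.single 0 1 = enc (p + 1 - 1) q := by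
      ext i; fin_cases i <;> simp [enc, Finsupp.single_apply]
    rw [h]
    simp [smul_monomial]

lemma Dy_mon (p q : ℕ) : Dy (mon p q) = (q : ℂ) • mon p (q - 1) := by
  rcases q with - | q
  · simp [mon, Dy, Xv, Yv, pderiv_mul, pderiv_pow, pderiv_X_of_ne]
  · rw [mon_eq_monomial, mon_eq_monomial]
    show pderiv 1 _ = _
    rw [pderiv_monomial]
    have h : enc p (q+1) - Finsupp.single 1 1 = enc p (q + 1 - 1) := by
      ext i; fin_cases i <;> simp [enc, Finsupp.single_apply]
    rw [h]
    simp [smul_monomial]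

lemma Dx_pow_mon (i p q : ℕ) : (Dx ^ i) (mon p q) = ff i p • mon (p - i) q := by
  induction i generalizing p with
  | zero => simp
  | succ i ih =>
    rw [pow_succ, Module.End.mul_apply, Dx_mon, map_smul]
    rcases p with - | p
    · simp [ff_eq_zero_of_lt]
    · rw [Nat.add_sub_cancel, ih, smul_smul, ff_succ, Nat.succ_sub_succ]
      push_cast
      ring_nf

lemma Dy_pow_mon (j p q : ℕ) : (Dy ^ j) (mon p q) = ff j q • mon p (q - j) := by
  induction j generalizing q with
  | zero => simp
  | succ j ih =>
    rw [pow_succ, Module.End.mul_apply, Dy_mon, map_smul]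
    rcases q with - | q
    · simp [ff_eq_zero_of_lt]
    · rw [Nat.add_sub_cancel, ih, smul_smul, ff_succ, Nat.succ_sub_succ]
      push_cast
      ring_nf

lemma Mf_mon (a b p q : ℕ) : Mf (mon a b) (mon p q) = mon (a + p) (b + q) := by
  simp only [Mf, LinearMap.mulLeft_apply, mon, pow_add]
  ring

/-- term operator of the sum: x^a y^b Dx^i Dy^j -/
lemma term_mon (a b i j p q : ℕ) :
    (Mf (mon a b) * Dx ^ i * Dy ^ j) (mon p q)
      = (ff i p * ff j q) • mon (a + (p - i)) (b + (q - j)) := by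
  rw [mul_assoc, Module.End.mul_apply, Module.End.mul_apply, Dy_pow_mon, map_smul, map_smul,
    Dx_pow_mon, map_smul, Mf_mon, smul_smul, mul_comm]

lemma Jp_mon (n p q : ℕ) : Jp n (mon p q) = ((p : ℂ) - n) • mon (p + 1) q := by
  have h2 : Xv ^ 2 = mon 2 0 := by simp [mon]
  have h1 : Xv = mon 1 0 := by simp [mon]
  rw [Jp, h2, h1, LinearMap.sub_apply, Module.End.mul_apply, Dx_mon, map_smul,
    Mf_mon, LinearMap.smul_apply, Mf_mon]
  rcases p with - | p
  · simp [sub_smul]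
  · rw [Nat.succ_sub_one]
    have : (2 + p) = (p + 1 + 1) := by omega
    rw [this]
    have : (1 + (p + 1)) = (p + 1 + 1) := by omega
    rw [this, sub_smul]
    push_cast
    ring_nf

lemma J0_mon (n p q : ℕ) : J0 n (mon p q) = ((p : ℂ) - n / 2) • mon p q := by
  have h1 : Xv = mon 1 0 := by simp [mon]
  rw [J0, h1, LinearMap.sub_apply, Module.End.mul_apply, Dx_mon, map_smul, Mf_mon,
    LinearMap.smul_apply, Module.End.one_apply, sub_smul]
  rcases p with - | p
  · simp
  · rw [Nat.succ_sub_one, Nat.zero_add]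
    have : (1 + p) = (p + 1) := by omega
    rw [this]

lemma Kp_mon (m p q : ℕ) : Kp m (mon p q) = ((q : ℂ) - m) • mon p (q + 1) := by
  have h2 : Yv ^ 2 = mon 0 2 := by simp [mon]
  have h1 : Yv = mon 0 1 := by simp [mon]
  rw [Kp, h2, h1, LinearMap.sub_apply, Module.End.mul_apply, Dy_mon, map_smul,
    Mf_mon, LinearMap.smul_apply, Mf_mon]
  rcases q with - | q
  · simp [sub_smul]
  · rw [Nat.succ_sub_one]
    have : (2 + q) = (q + 1 + 1) := by omega
    rw [this]
    have : (1 + (q + 1)) = (q + 1 + 1) := by omega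
    rw [this, sub_smul]
    push_cast
    ring_nf

lemma K0_mon (m p q : ℕ) : K0 m (mon p q) = ((q : ℂ) - m / 2) • mon p q := by
  have h1 : Yv = mon 0 1 := by simp [mon]
  rw [K0, h1, LinearMap.sub_apply, Module.End.mul_apply, Dy_mon, map_smul, Mf_mon,
    LinearMap.smul_apply, Module.End.one_apply, sub_smul]
  rcases q with - | q
  · simp
  · rw [Nat.succ_sub_one, Nat.zero_add]
    have : (1 + q) = (q + 1) := by omega
    rw [this]

lemma Jp_pow_mon (n d p q : ℕ) :
    ((Jp n) ^ d) (mon p q) = (∏ u ∈ Finset.range d, ((p : ℂ) + u - n)) • mon (p + d) q := by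
  induction d with
  | zero => simp
  | succ d ih =>
    rw [pow_succ', Module.End.mul_apply, ih, map_smul, Jp_mon, smul_smul,
      Finset.prod_range_succ]
    congr 1
    push_cast; ring

lemma J0_pow_mon (n s p q : ℕ) :
    ((J0 n) ^ s) (mon p q) = ((p : ℂ) - n / 2) ^ s • mon p q := by
  induction s with
  | zero => simp
  | succ s ih =>
    rw [pow_succ, Module.End.mul_apply, J0_mon, map_smul, ih, smul_smul, pow_succ, mul_comm]

lemma Kp_pow_mon (m d p q : ℕ) :
    ((Kp m) ^ d) (mon p q) = (∏ u ∈ Finset.range d, ((q : ℂ) + u - m)) • mon p (q + d) := by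
  induction d with
  | zero => simp
  | succ d ih =>
    rw [pow_succ', Module.End.mul_apply, ih, map_smul, Kp_mon, smul_smul,
      Finset.prod_range_succ]
    congr 1
    push_cast; ring

lemma K0_pow_mon (m s p q : ℕ) :
    ((K0 m) ^ s) (mon p q) = ((q : ℂ) - m / 2) ^ s • mon p q := by
  induction s with
  | zero => simp
  | succ s ih =>
    rw [pow_succ, Module.End.mul_apply, K0_mon, map_smul, ih, smul_smul, pow_succ, mul_comm]

abbrev PX : Polynomial ℂ := Polynomial.X
abbrev PC : ℂ → Polynomial ℂ := Polynomial.C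

/-- falling factorial polynomial X(X-1)...(X-i+1) -/
def ffpoly (i : ℕ) : Polynomial ℂ := ∏ u ∈ Finset.range i, (PX - PC (u : ℂ))

lemma ffpoly_monic (i : ℕ) : (ffpoly i).Monic :=
  Polynomial.monic_prod_of_monic _ _ (fun u _ => Polynomial.monic_X_sub_C _)

lemma ffpoly_natDegree (i : ℕ) : (ffpoly i).natDegree = i := by
  rw [ffpoly, Polynomial.natDegree_prod]
  · have h1 : ∀ u ∈ Finset.range i, (PX - PC (u : ℂ)).natDegree = 1 :=
      fun u _ => Polynomial.natDegree_X_sub_C _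
    rw [Finset.sum_congr rfl h1]
    simp
  · intro u _
    exact Polynomial.X_sub_C_ne_zero _

lemma ffpoly_eval (i p : ℕ) : (ffpoly i).eval (p : ℂ) = ff i p := by
  rw [ffpoly, Polynomial.eval_prod, ff]
  apply Finset.prod_congr rfl
  intro u _
  simp

/-- linear independence of monic families with degrees D, D+1, ... -/
lemma indep_monic (D : ℕ) (F : ℕ → Polynomial ℂ) (hF : ∀ j, (F j).Monic)
    (hdeg : ∀ j, (F j).natDegree = D + j) (α : ℕ → ℂ) :
    ∀ N : ℕ, (∑ j ∈ Finset.range N, α j • F j = 0) → ∀ j < N, α j = 0 := by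
  intro N
  induction N with
  | zero => intro _ j hj; omega
  | succ N ih =>
    intro h j hj
    have hN : α N = 0 := by
      have hc := congrArg (fun P => Polynomial.coeff P (D + N)) h
      simp only [Polynomial.finset_sum_coeff, Polynomial.coeff_smul, Polynomial.coeff_zero,
        smul_eq_mul] at hc
      rw [Finset.sum_range_succ] at hc
      have hz : ∀ j ∈ Finset.range N, α j * (F j).coeff (D + N) = 0 := by
        intro j hjN
        have : (F j).natDegree < D + N := by rw [hdeg]; simp at hjN; omega
        rw [Polynomial.coeff_eq_zero_of_natDegree_lt this, mul_zero]
      rw [Finset.sum_eq_zero hz, zero_add] at hc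
      have h1 : (F N).coeff (D + N) = 1 := by
        have := (hF N).coeff_natDegree
        rwa [hdeg] at this
      rw [h1, mul_one] at hc
      exact hc
    rcases Nat.lt_succ_iff_lt_or_eq.1 hj with hj' | rfl
    · apply ih _ _ hj'
      rw [Finset.sum_range_succ, hN, zero_smul, add_zero] at h
      exact h
    · exact hN

/-- A polynomial of degree < N vanishing at the N points a, a+1, ..., a+N-1 is zero. -/
lemma zero_of_vanish (ρ : Polynomial ℂ) (N a : ℕ) (hdeg : ρ.natDegree < N)
    (hv : ∀ u, u < N → ρ.eval ((a + u : ℕ) : ℂ) = 0) : ρ = 0 := by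
  apply Polynomial.eq_zero_of_natDegree_lt_card_of_eval_eq_zero' ρ
    ((Finset.range N).image (fun u => ((a + u : ℕ) : ℂ)))
  · intro z hz
    simp only [Finset.mem_image, Finset.mem_range] at hz
    obtain ⟨u, hu, rfl⟩ := hz
    exact hv u hu
  · rw [Finset.card_image_of_injOn, Finset.card_range]
    · exact hdeg
    · intro u hu v hv huv
      have : (a + u : ℕ) = (a + v : ℕ) := Nat.cast_injective huv
      omega

/-- Factoring out distinct roots. -/
lemma factor_roots (d : ℕ) (r : ℕ → ℂ) (hr : ∀ u < d, ∀ v < d, r u = r v → u = v) :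
    ∀ ρ : Polynomial ℂ, (∀ u < d, ρ.eval (r u) = 0) →
    ∃ ω : Polynomial ℂ, ρ = (∏ u ∈ Finset.range d, (PX - PC (r u))) * ω ∧
      ω.natDegree ≤ ρ.natDegree - d := by
  induction d with
  | zero => intro ρ _; exact ⟨ρ, by simp, by simp⟩
  | succ d ih =>
    intro ρ hv
    obtain ⟨ρ', hρ'⟩ := Polynomial.dvd_iff_isRoot.2 (hv d (Nat.lt_succ_self d))
    rcases eq_or_ne ρ 0 with rfl | hρ0
    · exact ⟨0, by simp, by simp⟩
    have hρ'0 : ρ' ≠ 0 := by rintro rfl; simp at hρ'; exact hρ0 hρ'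
    have hdegρ' : ρ'.natDegree = ρ.natDegree - 1 := by
      rw [hρ', Polynomial.natDegree_mul (Polynomial.X_sub_C_ne_zero _) hρ'0,
        Polynomial.natDegree_X_sub_C]
      omega
    have hv' : ∀ u < d, ρ'.eval (r u) = 0 := by
      intro u hu
      have h1 := hv u (Nat.lt_succ_of_lt hu)
      rw [hρ', Polynomial.eval_mul, Polynomial.eval_sub, Polynomial.eval_X,
        Polynomial.eval_C] at h1
      have hne : r u - r d ≠ 0 := by
        intro hz
        have : u = d := hr u (Nat.lt_succ_of_lt hu) d (Nat.lt_succ_self d)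
          (sub_eq_zero.1 hz)
        omega
      exact (mul_eq_zero.1 h1).resolve_left hne
    obtain ⟨ω, hω, hdeg⟩ :=
      ih (fun u hu v hv => hr u (Nat.lt_succ_of_lt hu) v (Nat.lt_succ_of_lt hv)) ρ' hv'
    refine ⟨ω, ?_, by omega⟩
    rw [hρ', hω, Finset.prod_range_succ]
    ring

/-- Taylor expansion with bounded degree. -/
lemma taylor_expand (ω : Polynomial ℂ) (c : ℂ) (N : ℕ) (hdeg : ω.natDegree < N) :
    ω = ∑ s ∈ Finset.range N, ((Polynomial.taylor c ω).coeff s) • (PX - PC c) ^ s := by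
  conv_lhs => rw [← Polynomial.sum_taylor_eq ω c]
  rw [Polynomial.sum_over_range' _ (fun s => by simp) N (by rwa [Polynomial.natDegree_taylor])]
  apply Finset.sum_congr rfl
  intro s _
  rw [Polynomial.smul_eq_C_mul]

/-- monomial with possibly negative exponents (truncated to 0) -/
def monz (s t : ℤ) : R2 := if 0 ≤ s ∧ 0 ≤ t then mon s.toNat t.toNat else 0

@[simp] lemma monz_natCast (p q : ℕ) : monz (p : ℤ) (q : ℤ) = mon p q := by
  rw [monz, if_pos ⟨Int.natCast_nonneg p, Int.natCast_nonneg q⟩]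
  simp

/-- the symbol-to-operator map of weight w -/
def Op2 (w : ℤ × ℤ) (ν σ : Polynomial ℂ) : Module.End ℂ R2 :=
  (basisMonomials (Fin 2) ℂ).constr ℂ fun e =>
    (ν.eval (e 0 : ℂ) * σ.eval (e 1 : ℂ)) • monz (e 0 + w.1) (e 1 + w.2)

lemma basis_eq_mon (e : Fin 2 →₀ ℕ) : (basisMonomials (Fin 2) ℂ) e = mon (e 0) (e 1) := by
  rw [coe_basisMonomials, mon_eq_monomial, enc_surj]

lemma End_ext {f g : Module.End ℂ R2} (h : ∀ p q : ℕ, f (mon p q) = g (mon p q)) : f = g := by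
  apply (basisMonomials (Fin 2) ℂ).ext
  intro e
  rw [basis_eq_mon]
  exact h (e 0) (e 1)

lemma Op2_mon (w : ℤ × ℤ) (ν σ : Polynomial ℂ) (p q : ℕ) :
    Op2 w ν σ (mon p q)
      = (ν.eval (p : ℂ) * σ.eval (q : ℂ)) • monz ((p : ℤ) + w.1) ((q : ℤ) + w.2) := by
  have h : mon p q = (basisMonomials (Fin 2) ℂ) (enc p q) := by rw [basis_eq_mon]; simp
  rw [h, Op2, Module.Basis.constr_basis]
  simp

lemma Op2_sum_left {ι : Type*} (w : ℤ × ℤ) (s : Finset ι) (c : ι → ℂ)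
    (F : ι → Polynomial ℂ) (σ : Polynomial ℂ) :
    Op2 w (∑ i ∈ s, c i • F i) σ = ∑ i ∈ s, c i • Op2 w (F i) σ := by
  apply End_ext
  intro p q
  rw [Op2_mon, LinearMap.sum_apply]
  have h : ∀ i ∈ s, (c i • Op2 w (F i) σ) (mon p q)
      = (c i * ((F i).eval (p : ℂ) * σ.eval (q : ℂ))) • monz ((p : ℤ) + w.1) ((q : ℤ) + w.2) := by
    intro i _
    rw [LinearMap.smul_apply, Op2_mon, smul_smul]
  rw [Finset.sum_congr rfl h, ← Finset.sum_smul]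
  congr 1
  simp only [Polynomial.eval_finset_sum, Polynomial.eval_smul, smul_eq_mul, Finset.sum_mul]
  exact Finset.sum_congr rfl (fun i _ => by ring)

lemma Op2_sum_right {ι : Type*} (w : ℤ × ℤ) (s : Finset ι) (c : ι → ℂ)
    (F : ι → Polynomial ℂ) (ν : Polynomial ℂ) :
    Op2 w ν (∑ i ∈ s, c i • F i) = ∑ i ∈ s, c i • Op2 w ν (F i) := by
  apply End_ext
  intro p q
  rw [Op2_mon, LinearMap.sum_apply]
  have h : ∀ i ∈ s, (c i • Op2 w ν (F i)) (mon p q)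
      = (c i * (ν.eval (p : ℂ) * (F i).eval (q : ℂ))) • monz ((p : ℤ) + w.1) ((q : ℤ) + w.2) := by
    intro i _
    rw [LinearMap.smul_apply, Op2_mon, smul_smul]
  rw [Finset.sum_congr rfl h, ← Finset.sum_smul]
  congr 1
  simp [Polynomial.eval_finset_sum, Finset.mul_sum, mul_left_comm]

lemma term_eq_Op2 (a b i j : ℕ) :
    Mf (mon a b) * Dx ^ i * Dy ^ j
      = Op2 ((a : ℤ) - i, (b : ℤ) - j) (ffpoly i) (ffpoly j) := by
  apply End_ext
  intro p q
  rw [term_mon, Op2_mon, ffpoly_eval, ffpoly_eval]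
  by_cases hi : i ≤ p
  · by_cases hj : j ≤ q
    · have h1 : ((p : ℤ) + ((a : ℤ) - i)) = ((a + (p - i) : ℕ) : ℤ) := by omega
      have h2 : ((q : ℤ) + ((b : ℤ) - j)) = ((b + (q - j) : ℕ) : ℤ) := by omega
      rw [h1, h2, monz_natCast]
    · rw [ff_eq_zero_of_lt (by omega : q < j)]
      simp
  · rw [ff_eq_zero_of_lt (by omega : p < i)]
    simp

/-- roots of the obstruction polynomial of weight d -/
def rx (n : ℕ) (d : ℤ) (u : ℕ) : ℂ := if 0 ≤ d then ((n - u : ℕ) : ℂ) else (u : ℂ)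

/-- obstruction polynomial of weight d -/
def gx (n : ℕ) (d : ℤ) : Polynomial ℂ := ∏ u ∈ Finset.range d.natAbs, (PX - PC (rx n d u))

def cx (n : ℕ) (d : ℤ) : ℂ := if 0 ≤ d then (n : ℂ) / 2 else ((-d).toNat : ℂ) + (n : ℂ) / 2

/-- canonical symbols of weight d -/
def xsym (n : ℕ) (d : ℤ) (s : ℕ) : Polynomial ℂ := gx n d * (PX - PC (cx n d)) ^ s

/-- canonical sl2 product operators of weight d, on the x side -/
def XA (n : ℕ) (d : ℤ) (s : ℕ) : Module.End ℂ R2 :=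
  if 0 ≤ d then (Jp n) ^ d.toNat * (J0 n) ^ s else (J0 n) ^ s * Jm ^ (-d).toNat

/-- canonical sl2 product operators of weight d, on the y side -/
def YB (m : ℕ) (d : ℤ) (t : ℕ) : Module.End ℂ R2 :=
  if 0 ≤ d then (Kp m) ^ d.toNat * (K0 m) ^ t else (K0 m) ^ t * Km ^ (-d).toNat

lemma rx_injOn (n : ℕ) (d : ℤ) (hd : d.natAbs ≤ n) :
    ∀ u < d.natAbs, ∀ v < d.natAbs, rx n d u = rx n d v → u = v := by
  intro u hu v hv huv
  rw [rx, rx] at huv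
  by_cases h0 : 0 ≤ d
  · rw [if_pos h0, if_pos h0] at huv
    have := Nat.cast_injective (R := ℂ) huv
    omega
  · rw [if_neg h0, if_neg h0] at huv
    exact_mod_cast huv

lemma gx_monic (n : ℕ) (d : ℤ) : (gx n d).Monic :=
  Polynomial.monic_prod_of_monic _ _ (fun u _ => Polynomial.monic_X_sub_C _)

lemma gx_natDegree (n : ℕ) (d : ℤ) : (gx n d).natDegree = d.natAbs := by
  rw [gx, Polynomial.natDegree_prod]
  · have h1 : ∀ u ∈ Finset.range d.natAbs, (PX - PC (rx n d u)).natDegree = 1 :=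
      fun u _ => Polynomial.natDegree_X_sub_C _
    rw [Finset.sum_congr rfl h1]
    simp
  · intro u _
    exact Polynomial.X_sub_C_ne_zero _

lemma xsym_monic (n : ℕ) (d : ℤ) (s : ℕ) : (xsym n d s).Monic :=
  (gx_monic n d).mul ((Polynomial.monic_X_sub_C _).pow s)

lemma xsym_natDegree (n : ℕ) (d : ℤ) (s : ℕ) : (xsym n d s).natDegree = d.natAbs + s := by
  rw [xsym, (gx_monic n d).natDegree_mul ((Polynomial.monic_X_sub_C _).pow s),
    gx_natDegree, Polynomial.natDegree_pow, Polynomial.natDegree_X_sub_C, mul_one]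

lemma XA_mem (n k : ℕ) (d : ℤ) (s : ℕ) (h : d.natAbs + s ≤ k) :
    XA n d s ∈ prodsLE k {Jp n, Jm, J0 n} := by
  rw [XA]
  by_cases h0 : 0 ≤ d
  · rw [if_pos h0]
    refine ⟨List.replicate d.toNat (Jp n) ++ List.replicate s (J0 n), ?_, ?_, ?_⟩
    · simp only [List.length_append, List.length_replicate]
      omega
    · intro a ha
      simp only [List.mem_append, List.mem_replicate] at ha
      rcases ha with ⟨_, rfl⟩ | ⟨_, rfl⟩
      · exact Set.mem_insert _ _
      · exact Set.mem_insert_iff.2 (Or.inr (Set.mem_insert_iff.2 (Or.inr rfl)))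
    · rw [List.prod_append, List.prod_replicate, List.prod_replicate]
  · rw [if_neg h0]
    refine ⟨List.replicate s (J0 n) ++ List.replicate (-d).toNat Jm, ?_, ?_, ?_⟩
    · simp only [List.length_append, List.length_replicate]
      omega
    · intro a ha
      simp only [List.mem_append, List.mem_replicate] at ha
      rcases ha with ⟨_, rfl⟩ | ⟨_, rfl⟩
      · exact Set.mem_insert_iff.2 (Or.inr (Set.mem_insert_iff.2 (Or.inr rfl)))
      · exact Set.mem_insert_iff.2 (Or.inr (Set.mem_insert_iff.2 (Or.inl rfl)))
    · rw [List.prod_append, List.prod_replicate, List.prod_replicate]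

lemma YB_mem (m l : ℕ) (d : ℤ) (t : ℕ) (h : d.natAbs + t ≤ l) :
    YB m d t ∈ prodsLE l {Kp m, Km, K0 m} := by
  rw [YB]
  by_cases h0 : 0 ≤ d
  · rw [if_pos h0]
    refine ⟨List.replicate d.toNat (Kp m) ++ List.replicate t (K0 m), ?_, ?_, ?_⟩
    · simp only [List.length_append, List.length_replicate]
      omega
    · intro a ha
      simp only [List.mem_append, List.mem_replicate] at ha
      rcases ha with ⟨_, rfl⟩ | ⟨_, rfl⟩
      · exact Set.mem_insert _ _
      · exact Set.mem_insert_iff.2 (Or.inr (Set.mem_insert_iff.2 (Or.inr rfl)))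
    · rw [List.prod_append, List.prod_replicate, List.prod_replicate]
  · rw [if_neg h0]
    refine ⟨List.replicate t (K0 m) ++ List.replicate (-d).toNat Km, ?_, ?_, ?_⟩
    · simp only [List.length_append, List.length_replicate]
      omega
    · intro a ha
      simp only [List.mem_append, List.mem_replicate] at ha
      rcases ha with ⟨_, rfl⟩ | ⟨_, rfl⟩
      · exact Set.mem_insert_iff.2 (Or.inr (Set.mem_insert_iff.2 (Or.inr rfl)))
      · exact Set.mem_insert_iff.2 (Or.inr (Set.mem_insert_iff.2 (Or.inl rfl)))
    · rw [List.prod_append, List.prod_replicate, List.prod_replicate]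

lemma xsym_eval_zero_of_neg (n : ℕ) (d : ℤ) (s : ℕ) (p : ℕ) (hp : (p : ℤ) + d < 0) :
    (xsym n d s).eval (p : ℂ) = 0 := by
  have h0 : ¬ (0 ≤ d) := by omega
  have hpe : p < (-d).toNat := by omega
  rw [xsym, Polynomial.eval_mul, gx, Polynomial.eval_prod]
  have : ∏ u ∈ Finset.range d.natAbs, (PX - PC (rx n d u)).eval (p : ℂ) = ff d.natAbs p := by
    rw [ff]
    apply Finset.prod_congr rfl
    intro u hu
    rw [rx, if_neg h0]
    simp
  rw [this, ff_eq_zero_of_lt (by omega : p < d.natAbs), zero_mul]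

lemma XA_mon (n : ℕ) (d : ℤ) (s : ℕ) (hd : d.natAbs ≤ n) (p q : ℕ) :
    XA n d s (mon p q) = (xsym n d s).eval (p : ℂ) • monz ((p : ℤ) + d) (q : ℤ) := by
  by_cases h0 : 0 ≤ d
  · rw [XA, if_pos h0, Module.End.mul_apply, J0_pow_mon, map_smul, Jp_pow_mon, smul_smul]
    have hm : ((p + d.toNat : ℕ) : ℤ) = (p : ℤ) + d := by omega
    rw [← hm, monz_natCast]
    congr 1
    rw [xsym, Polynomial.eval_mul, gx, Polynomial.eval_prod]
    have hg : ∏ u ∈ Finset.range d.natAbs, (PX - PC (rx n d u)).eval (p : ℂ)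
        = ∏ u ∈ Finset.range d.toNat, ((p : ℂ) + u - n) := by
      have hn : d.natAbs = d.toNat := by omega
      rw [hn]
      apply Finset.prod_congr rfl
      intro u hu
      simp only [Finset.mem_range] at hu
      rw [rx, if_pos h0]
      have hun : u ≤ n := by omega
      push_cast [hun]
      simp
      ring
    rw [hg, Polynomial.eval_pow, Polynomial.eval_sub, Polynomial.eval_X, Polynomial.eval_C,
      cx, if_pos h0, mul_comm]
  · rw [XA, if_neg h0, Module.End.mul_apply]
    have hJm : (Jm ^ (-d).toNat) (mon p q) = ff ((-d).toNat) p • mon (p - (-d).toNat) q :=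
      Dx_pow_mon _ _ _
    rw [hJm, map_smul, J0_pow_mon, smul_smul]
    set e := (-d).toNat with he
    by_cases hpe : e ≤ p
    · have hm : ((p - e : ℕ) : ℤ) = (p : ℤ) + d := by omega
      rw [← hm, monz_natCast]
      congr 1
      rw [xsym, Polynomial.eval_mul, gx, Polynomial.eval_prod]
      have hg : ∏ u ∈ Finset.range d.natAbs, (PX - PC (rx n d u)).eval (p : ℂ) = ff e p := by
        have hn : d.natAbs = e := by omega
        rw [hn, ff]
        apply Finset.prod_congr rfl
        intro u hu
        rw [rx, if_neg h0]
        simp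
      rw [hg, Polynomial.eval_pow, Polynomial.eval_sub, Polynomial.eval_X, Polynomial.eval_C,
        cx, if_neg h0, ← he]
      have hc : ((p - e : ℕ) : ℂ) = (p : ℂ) - e := by
        push_cast [hpe]
        ring
      simp only [hc]
      ring_nf
    · rw [ff_eq_zero_of_lt (by omega : p < e), zero_mul, zero_smul,
        xsym_eval_zero_of_neg n d s p (by omega), zero_smul]

lemma YB_mon (m : ℕ) (d : ℤ) (t : ℕ) (hd : d.natAbs ≤ m) (p q : ℕ) :
    YB m d t (mon p q) = (xsym m d t).eval (q : ℂ) • monz (p : ℤ) ((q : ℤ) + d) := by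
  by_cases h0 : 0 ≤ d
  · rw [YB, if_pos h0, Module.End.mul_apply, K0_pow_mon, map_smul, Kp_pow_mon, smul_smul]
    have hm : ((q + d.toNat : ℕ) : ℤ) = (q : ℤ) + d := by omega
    rw [← hm, monz_natCast]
    congr 1
    rw [xsym, Polynomial.eval_mul, gx, Polynomial.eval_prod]
    have hg : ∏ u ∈ Finset.range d.natAbs, (PX - PC (rx m d u)).eval (q : ℂ)
        = ∏ u ∈ Finset.range d.toNat, ((q : ℂ) + u - m) := by
      have hn : d.natAbs = d.toNat := by omega
      rw [hn]
      apply Finset.prod_congr rfl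
      intro u hu
      simp only [Finset.mem_range] at hu
      rw [rx, if_pos h0]
      have hun : u ≤ m := by omega
      push_cast [hun]
      simp
      ring
    rw [hg, Polynomial.eval_pow, Polynomial.eval_sub, Polynomial.eval_X, Polynomial.eval_C,
      cx, if_pos h0, mul_comm]
  · rw [YB, if_neg h0, Module.End.mul_apply]
    have hKm : (Km ^ (-d).toNat) (mon p q) = ff ((-d).toNat) q • mon p (q - (-d).toNat) :=
      Dy_pow_mon _ _ _
    rw [hKm, map_smul, K0_pow_mon, smul_smul]
    set e := (-d).toNat with he
    by_cases hpe : e ≤ q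
    · have hm : ((q - e : ℕ) : ℤ) = (q : ℤ) + d := by omega
      rw [← hm, monz_natCast]
      congr 1
      rw [xsym, Polynomial.eval_mul, gx, Polynomial.eval_prod]
      have hg : ∏ u ∈ Finset.range d.natAbs, (PX - PC (rx m d u)).eval (q : ℂ) = ff e q := by
        have hn : d.natAbs = e := by omega
        rw [hn, ff]
        apply Finset.prod_congr rfl
        intro u hu
        rw [rx, if_neg h0]
        simp
      rw [hg, Polynomial.eval_pow, Polynomial.eval_sub, Polynomial.eval_X, Polynomial.eval_C,
        cx, if_neg h0, ← he]
      have hc : ((q - e : ℕ) : ℂ) = (q : ℂ) - e := by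
        push_cast [hpe]
        ring
      simp only [hc]
      ring_nf
    · rw [ff_eq_zero_of_lt (by omega : q < e), zero_mul, zero_smul,
        xsym_eval_zero_of_neg m d t q (by omega), zero_smul]

lemma XA_mul_YB (n m : ℕ) (d₁ d₂ : ℤ) (s t : ℕ) (hd₁ : d₁.natAbs ≤ n) (hd₂ : d₂.natAbs ≤ m) :
    XA n d₁ s * YB m d₂ t = Op2 (d₁, d₂) (xsym n d₁ s) (xsym m d₂ t) := by
  apply End_ext
  intro p q
  rw [Module.End.mul_apply, YB_mon m d₂ t hd₂, map_smul, Op2_mon]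
  by_cases hq : 0 ≤ (q : ℤ) + d₂
  · have hm : ((q : ℤ) + d₂) = ((((q : ℤ) + d₂).toNat : ℕ) : ℤ) := by omega
    rw [hm, monz_natCast, XA_mon n d₁ s hd₁, smul_smul, mul_comm, ← hm]
  · have h1 : monz (p : ℤ) ((q : ℤ) + d₂) = 0 := by
      rw [monz, if_neg]
      intro hh
      exact hq hh.2
    have h2 : monz ((p : ℤ) + d₁) ((q : ℤ) + d₂) = 0 := by
      rw [monz, if_neg]
      intro hh
      exact hq hh.2
    simp [h1, h2]

lemma Op2_zero_left (w : ℤ × ℤ) (σ : Polynomial ℂ) : Op2 w 0 σ = 0 := by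
  apply End_ext
  intro p q
  rw [Op2_mon]
  simp

lemma Op2_zero_right (w : ℤ × ℤ) (ν : Polynomial ℂ) : Op2 w ν 0 = 0 := by
  apply End_ext
  intro p q
  rw [Op2_mon]
  simp

lemma ffpoly_deg' : ∀ j : ℕ, (ffpoly j).natDegree = 0 + j := by
  intro j; rw [ffpoly_natDegree, Nat.zero_add]

lemma weight_core (n m k l : ℕ) (hk : k ≤ n) (hl : l ≤ m) (d₁ d₂ : ℤ) (c : ℕ → ℕ → ℂ)
    (hc1 : ∀ (i j : ℕ), ((i : ℕ) : ℤ) + d₁ < 0 → c i j = 0)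
    (hc2 : ∀ (i j : ℕ), ((j : ℕ) : ℤ) + d₂ < 0 → c i j = 0)
    (hvan : ∀ p q : ℕ, p ≤ n → q ≤ m → 0 ≤ (p : ℤ) + d₁ → 0 ≤ (q : ℤ) + d₂ →
      ((n : ℤ) < (p : ℤ) + d₁ ∨ (m : ℤ) < (q : ℤ) + d₂) →
      ∑ i ∈ Finset.range (k+1), ∑ j ∈ Finset.range (l+1), c i j * ff i p * ff j q = 0) :
    ∑ j ∈ Finset.range (l+1), ∑ i ∈ Finset.range (k+1),
        c i j • Op2 (d₁, d₂) (ffpoly i) (ffpoly j)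
      ∈ Submodule.span ℂ {P : Module.End ℂ R2 | ∃ A ∈ prodsLE k {Jp n, Jm, J0 n},
          ∃ B ∈ prodsLE l {Kp m, Km, K0 m}, P = A * B} := by
  classical
  -- the row polynomials
  set ρ : ℕ → Polynomial ℂ := fun j => ∑ i ∈ Finset.range (k+1), c i j • ffpoly i with hρdef
  have hρdeg : ∀ j, (ρ j).natDegree ≤ k := by
    intro j
    apply Polynomial.natDegree_sum_le_of_forall_le
    intro i hi
    exact (Polynomial.natDegree_smul_le _ _).trans
      (by rw [ffpoly_natDegree]; exact Nat.lt_succ_iff.1 (Finset.mem_range.1 hi))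
  have hρeval : ∀ j (p : ℕ), (ρ j).eval (p : ℂ)
      = ∑ i ∈ Finset.range (k+1), c i j * ff i p := by
    intro j p
    rw [hρdef]
    simp only [Polynomial.eval_finset_sum, Polynomial.eval_smul, smul_eq_mul, ffpoly_eval]
  -- rewrite the double sum using rows
  have hsum : ∑ j ∈ Finset.range (l+1), ∑ i ∈ Finset.range (k+1),
      c i j • Op2 (d₁, d₂) (ffpoly i) (ffpoly j)
      = ∑ j ∈ Finset.range (l+1), Op2 (d₁, d₂) (ρ j) (ffpoly j) := by
    apply Finset.sum_congr rfl
    intro j _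
    rw [hρdef, Op2_sum_left]
  rw [hsum]
  -- Step V1 : vanishing of rows at high points
  have V1 : ∀ j ≤ l, ∀ p : ℕ, p ≤ n → 0 ≤ (p : ℤ) + d₁ → (n : ℤ) < (p : ℤ) + d₁ →
      (ρ j).eval (p : ℂ) = 0 := by
    intro j hj p hpn hp0 hpd
    have hσ : (∑ j' ∈ Finset.range (l+1), ((ρ j').eval (p : ℂ)) • ffpoly j') = 0 := by
      apply zero_of_vanish _ (m+1) 0
      · have hdeg : (∑ j' ∈ Finset.range (l+1),
            ((ρ j').eval (p : ℂ)) • ffpoly j').natDegree ≤ l := by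
          apply Polynomial.natDegree_sum_le_of_forall_le
          intro j' hj'
          exact (Polynomial.natDegree_smul_le _ _).trans
            (by rw [ffpoly_natDegree]; exact Nat.lt_succ_iff.1 (Finset.mem_range.1 hj'))
        omega
      · intro q hq
        rw [Polynomial.eval_finset_sum]
        have hev : ∀ j' ∈ Finset.range (l+1),
            (((ρ j').eval (p : ℂ)) • ffpoly j').eval ((0 + q : ℕ) : ℂ)
            = ∑ i ∈ Finset.range (k+1), c i j' * ff i p * ff j' (0 + q) := by
          intro j' _
          rw [Polynomial.eval_smul, smul_eq_mul, ffpoly_eval, hρeval, Finset.sum_mul]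
        rw [Finset.sum_congr rfl hev, Finset.sum_comm]
        by_cases hq2 : 0 ≤ ((0 + q : ℕ) : ℤ) + d₂
        · exact hvan p (0 + q) hpn (by omega) hp0 hq2 (Or.inl hpd)
        · apply Finset.sum_eq_zero
          intro i _
          apply Finset.sum_eq_zero
          intro j' hj'
          by_cases hj2 : ((j' : ℕ) : ℤ) + d₂ < 0
          · rw [hc2 i j' hj2, zero_mul, zero_mul]
          · rw [ff_eq_zero_of_lt (by omega : (0 + q) < j'), mul_zero]
    exact indep_monic 0 ffpoly ffpoly_monic ffpoly_deg'
      (fun j' => (ρ j').eval (p : ℂ)) (l+1) hσ j (by omega)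
  -- degenerate x-weight: rows vanish identically
  by_cases hd1 : d₁.natAbs ≤ k
  swap
  · -- |d₁| > k : every row polynomial is 0
    have hρ0 : ∀ j ≤ l, ρ j = 0 := by
      intro j hj
      by_cases h0 : 0 ≤ d₁
      · -- d₁ > k : k+1 high vanishing points n-k, ..., n
        apply zero_of_vanish _ (k+1) (n - k) (by have := hρdeg j; omega)
        intro u hu
        exact V1 j hj (n - k + u) (by omega) (by omega) (by omega)
      · -- d₁ < -k : all coefficients vanish
        rw [hρdef]
        apply Finset.sum_eq_zero
        intro i hi
        rw [hc1 i j (by simp only [Finset.mem_range] at hi; omega), zero_smul]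
    have hz : ∑ j ∈ Finset.range (l+1), Op2 (d₁, d₂) (ρ j) (ffpoly j) = 0 := by
      apply Finset.sum_eq_zero
      intro j hj
      rw [hρ0 j (by simp only [Finset.mem_range] at hj; omega), Op2_zero_left]
    rw [hz]
    exact Submodule.zero_mem _
  -- main case : factor the rows
  have hroots : ∀ j ≤ l, ∀ u < d₁.natAbs, (ρ j).eval (rx n d₁ u) = 0 := by
    intro j hj u hu
    by_cases h0 : 0 ≤ d₁
    · rw [rx, if_pos h0]
      have hcast : ((n - u : ℕ) : ℤ) = (n : ℤ) - u := by omega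
      exact V1 j hj (n - u) (by omega) (by omega) (by omega)
    · rw [rx, if_neg h0, hρeval]
      apply Finset.sum_eq_zero
      intro i hi
      by_cases hi2 : ((i : ℕ) : ℤ) + d₁ < 0
      · rw [hc1 i j hi2, zero_mul]
      · rw [ff_eq_zero_of_lt (by omega : u < i), mul_zero]
  have HF1 : ∀ j : ℕ, ∃ w : Polynomial ℂ, j ≤ l →
      (ρ j = gx n d₁ * w ∧ w.natDegree ≤ k - d₁.natAbs) := by
    intro j
    by_cases hj : j ≤ l
    · obtain ⟨w, hw1, hw2⟩ := factor_roots d₁.natAbs (rx n d₁)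
        (rx_injOn n d₁ (by omega)) (ρ j) (hroots j hj)
      exact ⟨w, fun _ => ⟨hw1, hw2.trans (Nat.sub_le_sub_right (hρdeg j) _)⟩⟩
    · exact ⟨0, fun h => absurd h hj⟩
  choose ω hω using HF1
  set a : ℕ → ℕ → ℂ := fun j s => (Polynomial.taylor (cx n d₁) (ω j)).coeff s with hadef
  have hρx : ∀ j ≤ l, ρ j
      = ∑ s ∈ Finset.range (k - d₁.natAbs + 1), a j s • xsym n d₁ s := by
    intro j hj
    obtain ⟨hw1, hw2⟩ := hω j hj
    rw [hw1]
    conv_lhs => rw [taylor_expand (ω j) (cx n d₁) (k - d₁.natAbs + 1) (by omega)]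
    rw [Finset.mul_sum]
    apply Finset.sum_congr rfl
    intro s _
    rw [xsym, mul_smul_comm]
  -- the column polynomials of the x-canonical expansion
  set σ' : ℕ → Polynomial ℂ := fun s => ∑ j ∈ Finset.range (l+1), a j s • ffpoly j with hσ'def
  have hσ'deg : ∀ s, (σ' s).natDegree ≤ l := by
    intro s
    apply Polynomial.natDegree_sum_le_of_forall_le
    intro j hj
    exact (Polynomial.natDegree_smul_le _ _).trans
      (by rw [ffpoly_natDegree]; exact Nat.lt_succ_iff.1 (Finset.mem_range.1 hj))
  have hσ'eval : ∀ s (q : ℕ), (σ' s).eval (q : ℂ)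
      = ∑ j ∈ Finset.range (l+1), a j s * ff j q := by
    intro s q
    rw [hσ'def]
    simp only [Polynomial.eval_finset_sum, Polynomial.eval_smul, smul_eq_mul, ffpoly_eval]
  have ha0 : ∀ j ≤ l, ρ j = 0 → ∀ s, a j s = 0 := by
    intro j hj h0 s
    obtain ⟨hw1, _⟩ := hω j hj
    rw [h0] at hw1
    have hωz : ω j = 0 := by
      rcases mul_eq_zero.1 hw1.symm with h | h
      · exact absurd h (gx_monic n d₁).ne_zero
      · exact h
    rw [hadef]
    simp [hωz]
  -- total rewriting through the canonical x-symbols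
  have hTot : ∑ j ∈ Finset.range (l+1), Op2 (d₁, d₂) (ρ j) (ffpoly j)
      = ∑ s ∈ Finset.range (k - d₁.natAbs + 1), Op2 (d₁, d₂) (xsym n d₁ s) (σ' s) := by
    have h1 : ∀ j ∈ Finset.range (l+1), Op2 (d₁, d₂) (ρ j) (ffpoly j)
        = ∑ s ∈ Finset.range (k - d₁.natAbs + 1),
            a j s • Op2 (d₁, d₂) (xsym n d₁ s) (ffpoly j) := by
      intro j hj
      rw [hρx j (by simp only [Finset.mem_range] at hj; omega)]
      exact Op2_sum_left _ _ _ _ _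
    rw [Finset.sum_congr rfl h1, Finset.sum_comm]
    apply Finset.sum_congr rfl
    intro s _
    rw [hσ'def, Op2_sum_right]
  rw [hTot]
  -- Step V2 : vanishing of columns at high points
  have V2 : ∀ s ≤ k - d₁.natAbs, ∀ q : ℕ, q ≤ m → 0 ≤ (q : ℤ) + d₂ → (m : ℤ) < (q : ℤ) + d₂ →
      (σ' s).eval (q : ℂ) = 0 := by
    intro s hs q hqm hq0 hqd
    have hP : (∑ s' ∈ Finset.range (k - d₁.natAbs + 1),
        ((σ' s').eval (q : ℂ)) • xsym n d₁ s') = 0 := by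
      apply zero_of_vanish _ (n+1) 0
      · have hdeg : (∑ s' ∈ Finset.range (k - d₁.natAbs + 1),
            ((σ' s').eval (q : ℂ)) • xsym n d₁ s').natDegree ≤ k := by
          apply Polynomial.natDegree_sum_le_of_forall_le
          intro s' hs'
          refine (Polynomial.natDegree_smul_le _ _).trans ?_
          rw [xsym_natDegree]
          simp only [Finset.mem_range] at hs'
          omega
        omega
      · intro p hp
        rw [Polynomial.eval_finset_sum]
        have hev : ∀ s' ∈ Finset.range (k - d₁.natAbs + 1),
            (((σ' s').eval (q : ℂ)) • xsym n d₁ s').eval (((0 + p : ℕ)) : ℂ)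
            = ∑ j ∈ Finset.range (l+1),
                (a j s' * (xsym n d₁ s').eval (((0 + p : ℕ)) : ℂ)) * ff j q := by
          intro s' _
          rw [Polynomial.eval_smul, smul_eq_mul, hσ'eval, Finset.sum_mul]
          apply Finset.sum_congr rfl
          intro j _
          ring
        rw [Finset.sum_congr rfl hev, Finset.sum_comm]
        have hev2 : ∀ j ∈ Finset.range (l+1),
            ∑ s' ∈ Finset.range (k - d₁.natAbs + 1),
              (a j s' * (xsym n d₁ s').eval (((0 + p : ℕ)) : ℂ)) * ff j q
            = ∑ i ∈ Finset.range (k+1), (c i j * ff i (0 + p)) * ff j q := by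
          intro j hj
          rw [← Finset.sum_mul, ← Finset.sum_mul]
          congr 1
          have := hρx j (by simp only [Finset.mem_range] at hj; omega)
          have heval : (ρ j).eval (((0 + p : ℕ)) : ℂ)
              = ∑ s' ∈ Finset.range (k - d₁.natAbs + 1),
                  a j s' * (xsym n d₁ s').eval (((0 + p : ℕ)) : ℂ) := by
            rw [this]
            simp only [Polynomial.eval_finset_sum, Polynomial.eval_smul, smul_eq_mul]
          rw [← heval, hρeval]
        rw [Finset.sum_congr rfl hev2, Finset.sum_comm]
        by_cases hp1 : 0 ≤ ((0 + p : ℕ) : ℤ) + d₁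
        · have := hvan (0 + p) q (by omega) hqm hp1 hq0 (Or.inr hqd)
          rw [← this]
        · apply Finset.sum_eq_zero
          intro i _
          apply Finset.sum_eq_zero
          intro j _
          by_cases hi2 : ((i : ℕ) : ℤ) + d₁ < 0
          · rw [hc1 i j hi2, zero_mul, zero_mul]
          · rw [ff_eq_zero_of_lt (by omega : (0 + p) < i), mul_zero, zero_mul]
    exact indep_monic d₁.natAbs (xsym n d₁) (xsym_monic n d₁) (xsym_natDegree n d₁)
      (fun s' => (σ' s').eval (q : ℂ)) (k - d₁.natAbs + 1) hP s (by omega)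
  -- degenerate y-weight
  by_cases hd2 : d₂.natAbs ≤ l
  swap
  · have hσ'0 : ∀ s ∈ Finset.range (k - d₁.natAbs + 1), σ' s = 0 := by
      intro s hs
      by_cases h0 : 0 ≤ d₂
      · apply zero_of_vanish _ (l+1) (m - l) (by have := hσ'deg s; omega)
        intro u hu
        exact V2 s (by simp only [Finset.mem_range] at hs; omega) (m - l + u)
          (by omega) (by omega) (by omega)
      · rw [hσ'def]
        apply Finset.sum_eq_zero
        intro j hj
        have hρj : ρ j = 0 := by
          rw [hρdef]
          apply Finset.sum_eq_zero
          intro i _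
          rw [hc2 i j (by simp only [Finset.mem_range] at hj; omega), zero_smul]
        rw [ha0 j (by simp only [Finset.mem_range] at hj; omega) hρj s, zero_smul]
    have hz : ∑ s ∈ Finset.range (k - d₁.natAbs + 1), Op2 (d₁, d₂) (xsym n d₁ s) (σ' s) = 0 := by
      apply Finset.sum_eq_zero
      intro s hs
      rw [hσ'0 s hs, Op2_zero_right]
    rw [hz]
    exact Submodule.zero_mem _
  -- main case : factor the columns
  have hroots2 : ∀ s ≤ k - d₁.natAbs, ∀ u < d₂.natAbs, (σ' s).eval (rx m d₂ u) = 0 := by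
    intro s hs u hu
    by_cases h0 : 0 ≤ d₂
    · rw [rx, if_pos h0]
      exact V2 s hs (m - u) (by omega) (by omega) (by omega)
    · rw [rx, if_neg h0, hσ'eval]
      apply Finset.sum_eq_zero
      intro j hj
      by_cases hj2 : ((j : ℕ) : ℤ) + d₂ < 0
      · have hρj : ρ j = 0 := by
          rw [hρdef]
          apply Finset.sum_eq_zero
          intro i _
          rw [hc2 i j hj2, zero_smul]
        rw [ha0 j (by simp only [Finset.mem_range] at hj; omega) hρj s, zero_mul]
      · rw [ff_eq_zero_of_lt (by omega : u < j), mul_zero]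
  have HF2 : ∀ s : ℕ, ∃ w : Polynomial ℂ, s ≤ k - d₁.natAbs →
      (σ' s = gx m d₂ * w ∧ w.natDegree ≤ l - d₂.natAbs) := by
    intro s
    by_cases hs : s ≤ k - d₁.natAbs
    · obtain ⟨w, hw1, hw2⟩ := factor_roots d₂.natAbs (rx m d₂)
        (rx_injOn m d₂ (by omega)) (σ' s) (hroots2 s hs)
      exact ⟨w, fun _ => ⟨hw1, hw2.trans (Nat.sub_le_sub_right (hσ'deg s) _)⟩⟩
    · exact ⟨0, fun h => absurd h hs⟩
  choose τ hτ using HF2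
  set b : ℕ → ℕ → ℂ := fun s t => (Polynomial.taylor (cx m d₂) (τ s)).coeff t with hbdef
  have hσ'x : ∀ s ≤ k - d₁.natAbs, σ' s
      = ∑ t ∈ Finset.range (l - d₂.natAbs + 1), b s t • xsym m d₂ t := by
    intro s hs
    obtain ⟨hw1, hw2⟩ := hτ s hs
    rw [hw1]
    conv_lhs => rw [taylor_expand (τ s) (cx m d₂) (l - d₂.natAbs + 1) (by omega)]
    rw [Finset.mul_sum]
    apply Finset.sum_congr rfl
    intro t _
    rw [xsym, mul_smul_comm]
  -- final assembly
  have hFin : ∑ s ∈ Finset.range (k - d₁.natAbs + 1), Op2 (d₁, d₂) (xsym n d₁ s) (σ' s)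
      = ∑ s ∈ Finset.range (k - d₁.natAbs + 1), ∑ t ∈ Finset.range (l - d₂.natAbs + 1),
          b s t • (XA n d₁ s * YB m d₂ t) := by
    apply Finset.sum_congr rfl
    intro s hs
    rw [hσ'x s (by simp only [Finset.mem_range] at hs; omega), Op2_sum_right]
    apply Finset.sum_congr rfl
    intro t _
    rw [XA_mul_YB n m d₁ d₂ s t (by omega) (by omega)]
  rw [hFin]
  apply Submodule.sum_mem
  intro s hs
  apply Submodule.sum_mem
  intro t ht
  apply Submodule.smul_mem
  apply Submodule.subset_span
  refine ⟨XA n d₁ s, XA_mem n k d₁ s ?_, YB m d₂ t, YB_mem m l d₂ t ?_, rfl⟩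
  · simp only [Finset.mem_range] at hs; omega
  · simp only [Finset.mem_range] at ht; omega

lemma mon_mem_Rmod (n m p q : ℕ) (hp : p ≤ n) (hq : q ≤ m) : mon p q ∈ Rmod n m :=
  Submodule.subset_span ⟨p, q, hp, hq, rfl⟩

lemma coeff_zero_of_mem_Rmod (n m : ℕ) (P : R2) (hP : P ∈ Rmod n m) :
    ∀ p q : ℕ, (n < p ∨ m < q) → coeff (enc p q) P = 0 := by
  induction hP using Submodule.span_induction with
  | mem x hx =>
    obtain ⟨i, j, hi, hj, rfl⟩ := hx
    intro p q hpq
    have hx : (Xv ^ i * Yv ^ j : R2) = mon i j := rfl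
    rw [hx, coeff_mon]
    have : ¬ (enc i j = enc p q) := by
      intro h
      obtain ⟨h1, h2⟩ := enc_inj h
      omega
    rw [if_neg this]
  | zero => intro p q _; simp
  | add x y _ _ ihx ihy =>
    intro p q hpq
    rw [coeff_add, ihx p q hpq, ihy p q hpq, add_zero]
  | smul a x _ ihx =>
    intro p q hpq
    rw [coeff_smul, ihx p q hpq, smul_zero]

lemma Mf_sum {ι : Type*} (s : Finset ι) (g : ι → R2) :
    Mf (∑ x ∈ s, g x) = ∑ x ∈ s, Mf (g x) := by
  ext v
  simp [Mf, Finset.sum_mul]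

lemma Mf_smul (a : ℂ) (f : R2) : Mf (a • f) = a • Mf f := by
  ext v
  simp [Mf, smul_mul_assoc]

lemma finsupp_eq_of_components {e e' : Fin 2 →₀ ℕ} (h0 : e 0 = e' 0) (h1 : e 1 = e' 1) :
    e = e' := by
  rw [← enc_surj e, ← enc_surj e', h0, h1]

end Stmt5

open Stmt5

theorem stmt5 (n m k l : ℕ) (hk : k ≤ n) (hl : l ≤ m) (f : ℕ × ℕ → R2)
    (T : Module.End ℂ R2)
    (hT : T = ∑ ij ∈ Finset.range (k + 1) ×ˢ Finset.range (l + 1),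
      Mf (f ij) * Dx ^ ij.1 * Dy ^ ij.2)
    (hpres : ∀ P ∈ Rmod n m, T P ∈ Rmod n m) :
    T ∈ Submodule.span ℂ
      {P : Module.End ℂ R2 | ∃ A ∈ prodsLE k {Jp n, Jm, J0 n},
        ∃ B ∈ prodsLE l {Kp m, Km, K0 m}, P = A * B} := by
  classical
  set box := Finset.range (k + 1) ×ˢ Finset.range (l + 1) with hbox
  -- the finite set of weights
  set W : Finset (ℤ × ℤ) := box.biUnion (fun ij =>
    (f ij).support.image (fun e => ((e 0 : ℤ) - ij.1, (e 1 : ℤ) - ij.2))) with hW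
  -- the coefficients per weight
  set c : ℤ × ℤ → ℕ → ℕ → ℂ := fun w i j =>
    if 0 ≤ (i : ℤ) + w.1 ∧ 0 ≤ (j : ℤ) + w.2 then
      coeff (enc ((i : ℤ) + w.1).toNat ((j : ℤ) + w.2).toNat) (f (i, j)) else 0 with hc
  -- decomposition of each term of T
  have hdec : ∀ ij ∈ box, Mf (f ij) * Dx ^ ij.1 * Dy ^ ij.2
      = ∑ w ∈ W, c w ij.1 ij.2 • Op2 w (ffpoly ij.1) (ffpoly ij.2) := by
    rintro ⟨i, j⟩ hij
    have hf : f (i, j) = ∑ e ∈ (f (i, j)).support,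
        (coeff e (f (i, j))) • mon (e 0) (e 1) := by
      conv_lhs => rw [(f (i, j)).as_sum]
      apply Finset.sum_congr rfl
      intro e _
      rw [mon_eq_monomial, enc_surj, smul_monomial, smul_eq_mul, mul_one]
    have hL : Mf (f (i, j)) * Dx ^ i * Dy ^ j
        = ∑ e ∈ (f (i, j)).support, (coeff e (f (i, j))) •
            Op2 ((e 0 : ℤ) - i, (e 1 : ℤ) - j) (ffpoly i) (ffpoly j) := by
      conv_lhs => rw [hf]
      rw [Mf_sum]
      have h1 : ∀ e ∈ (f (i, j)).support,
          Mf ((coeff e (f (i, j))) • mon (e 0) (e 1)) = (coeff e (f (i, j))) • Mf (mon (e 0) (e 1)) :=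
        fun e _ => Mf_smul _ _
      rw [Finset.sum_congr rfl h1, Finset.sum_mul, Finset.sum_mul]
      apply Finset.sum_congr rfl
      intro e _
      rw [smul_mul_assoc, smul_mul_assoc, term_eq_Op2]
    rw [hL]
    -- compare with the sum over W
    set φ : (Fin 2 →₀ ℕ) → ℤ × ℤ := fun e => ((e 0 : ℤ) - i, (e 1 : ℤ) - j) with hφ
    have hsub : (f (i, j)).support.image φ ⊆ W := by
      intro w hw
      rw [hW]
      apply Finset.mem_biUnion.2
      exact ⟨(i, j), hij, hw⟩
    have hzero : ∀ w ∈ W, w ∉ (f (i, j)).support.image φ →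
        c w i j • Op2 w (ffpoly i) (ffpoly j) = 0 := by
      intro w hwW hwn
      have hc0 : c w i j = 0 := by
        simp only [hc]
        by_cases hg : 0 ≤ (i : ℤ) + w.1 ∧ 0 ≤ (j : ℤ) + w.2
        · rw [if_pos hg]
          by_contra hne
          apply hwn
          apply Finset.mem_image.2
          refine ⟨enc ((i : ℤ) + w.1).toNat ((j : ℤ) + w.2).toNat, ?_, ?_⟩
          · rwa [mem_support_iff]
          · rw [hφ]
            simp only [enc_apply0, enc_apply1]
            have h1 : ((((i : ℤ) + w.1).toNat : ℕ) : ℤ) - i = w.1 := by omega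
            have h2 : ((((j : ℤ) + w.2).toNat : ℕ) : ℤ) - j = w.2 := by omega
            rw [h1, h2]
        · rw [if_neg hg]
      rw [hc0, zero_smul]
    rw [← Finset.sum_subset hsub hzero]
    have hinj : ∀ x ∈ (f (i, j)).support, ∀ y ∈ (f (i, j)).support, φ x = φ y → x = y := by
      intro x _ y _ hxy
      rw [hφ] at hxy
      simp only [Prod.mk.injEq] at hxy
      apply finsupp_eq_of_components <;> omega
    rw [Finset.sum_image hinj]
    apply Finset.sum_congr rfl
    intro e he
    have hg : 0 ≤ (i : ℤ) + (φ e).1 ∧ 0 ≤ (j : ℤ) + (φ e).2 := by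
      rw [hφ]
      constructor <;> simp <;> omega
    have hc1 : c (φ e) i j = coeff e (f (i, j)) := by
      simp only [hc]; rw [if_pos hg]
      congr 1
      apply finsupp_eq_of_components
      · simp [hφ]
      · simp [hφ]
    rw [hc1]
  -- T as a sum over weights
  have hTW : T = ∑ w ∈ W, ∑ j ∈ Finset.range (l+1), ∑ i ∈ Finset.range (k+1),
      c w i j • Op2 w (ffpoly i) (ffpoly j) := by
    rw [hT, Finset.sum_congr rfl hdec, Finset.sum_comm]
    apply Finset.sum_congr rfl
    intro w _
    rw [hbox, Finset.sum_product]
    rw [Finset.sum_comm]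
  -- evaluation of T on monomials
  have happ : ∀ p q : ℕ, T (mon p q) = ∑ w ∈ W,
      (∑ i ∈ Finset.range (k+1), ∑ j ∈ Finset.range (l+1), c w i j * ff i p * ff j q) •
        monz ((p : ℤ) + w.1) ((q : ℤ) + w.2) := by
    intro p q
    rw [hTW]
    rw [LinearMap.sum_apply]
    apply Finset.sum_congr rfl
    intro w _
    rw [LinearMap.sum_apply]
    have h1 : ∀ j ∈ Finset.range (l+1),
        (∑ i ∈ Finset.range (k+1), c w i j • Op2 w (ffpoly i) (ffpoly j)) (mon p q)
        = (∑ i ∈ Finset.range (k+1), c w i j * ff i p * ff j q) •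
            monz ((p : ℤ) + w.1) ((q : ℤ) + w.2) := by
      intro j _
      rw [LinearMap.sum_apply]
      have h2 : ∀ i ∈ Finset.range (k+1),
          (c w i j • Op2 w (ffpoly i) (ffpoly j)) (mon p q)
          = (c w i j * ff i p * ff j q) • monz ((p : ℤ) + w.1) ((q : ℤ) + w.2) := by
        intro i _
        rw [LinearMap.smul_apply, Op2_mon, smul_smul, ffpoly_eval, ffpoly_eval, mul_assoc]
      rw [Finset.sum_congr rfl h2, ← Finset.sum_smul]
    rw [Finset.sum_congr rfl h1, ← Finset.sum_smul]
    congr 1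
    rw [Finset.sum_comm]
  -- vanishing conditions per weight
  have hvan : ∀ w ∈ W, ∀ p q : ℕ, p ≤ n → q ≤ m → 0 ≤ (p : ℤ) + w.1 → 0 ≤ (q : ℤ) + w.2 →
      ((n : ℤ) < (p : ℤ) + w.1 ∨ (m : ℤ) < (q : ℤ) + w.2) →
      ∑ i ∈ Finset.range (k+1), ∑ j ∈ Finset.range (l+1), c w i j * ff i p * ff j q = 0 := by
    intro w hwW p q hpn hqm hp0 hq0 hbad
    set P := ((p : ℤ) + w.1).toNat with hP
    set Q := ((q : ℤ) + w.2).toNat with hQ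
    have hmem : T (mon p q) ∈ Rmod n m := hpres _ (mon_mem_Rmod n m p q hpn hqm)
    have hco : coeff (enc P Q) (T (mon p q)) = 0 :=
      coeff_zero_of_mem_Rmod n m _ hmem P Q (by omega)
    rw [happ] at hco
    rw [coeff_sum] at hco
    have hterm : ∀ w' ∈ W,
        coeff (enc P Q) ((∑ i ∈ Finset.range (k+1), ∑ j ∈ Finset.range (l+1),
          c w' i j * ff i p * ff j q) • monz ((p : ℤ) + w'.1) ((q : ℤ) + w'.2))
        = if w' = w then (∑ i ∈ Finset.range (k+1), ∑ j ∈ Finset.range (l+1),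
            c w' i j * ff i p * ff j q) else 0 := by
      intro w' _
      rw [coeff_smul]
      by_cases hw' : w' = w
      · subst hw'
        have hmz : monz ((p : ℤ) + w'.1) ((q : ℤ) + w'.2) = mon P Q := by
          rw [monz, if_pos ⟨hp0, hq0⟩]
        rw [hmz, coeff_mon, if_pos rfl, if_pos rfl, smul_eq_mul, mul_one]
      · rw [if_neg hw']
        by_cases hg : 0 ≤ (p : ℤ) + w'.1 ∧ 0 ≤ (q : ℤ) + w'.2
        · have hmz : monz ((p : ℤ) + w'.1) ((q : ℤ) + w'.2)
              = mon ((p : ℤ) + w'.1).toNat ((q : ℤ) + w'.2).toNat := by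
            rw [monz, if_pos hg]
          rw [hmz, coeff_mon, if_neg, smul_zero]
          intro hEnc
          obtain ⟨h1, h2⟩ := enc_inj hEnc
          apply hw'
          have e1 : w'.1 = w.1 := by omega
          have e2 : w'.2 = w.2 := by omega
          exact Prod.ext e1 e2
        · have hmz : monz ((p : ℤ) + w'.1) ((q : ℤ) + w'.2) = 0 := by
            rw [monz, if_neg hg]
          rw [hmz, coeff_zero, smul_zero]
    rw [Finset.sum_congr rfl hterm, Finset.sum_ite_eq' W w, if_pos hwW] at hco
    exact hco
  -- conclude via the weight lemma
  rw [hTW]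
  apply Submodule.sum_mem
  intro w hwW
  apply weight_core n m k l hk hl w.1 w.2 (c w)
  · intro i j hi
    simp only [hc]; rw [if_neg]
    intro hg
    omega
  · intro i j hj
    simp only [hc]; rw [if_neg]
    intro hg
    omega
  · exact hvan w hwW
end
end

section
/- Let r, p, k ∈ ℕ with r ≥ 2, and set q = ⌊p/r⌋. Let T = Σ_{i+rj≤p, j≤q} M_{f_{ij}} ∘ D_x^i ∘ D_y^j (f_{ij} ∈ R) be a nonzero operator with f_{ij} = 0 whenever i + j > k, which preserves 𝒮^r_{p,q}. Suppose d ∈ ℤ is such that for all a, b ∈ ℕ, T(x^a y^b) lies in the ℂ-span of the monomials x^c y^e with c + r·e = a + r·b + d. Then −k·r ≤ d ≤ k. -/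
noncomputable section

open MvPolynomial

/-- `W¹ = D_x`. -/
def W1 : Module.End ℂ R2 := Dx

/-- `W² = M_{x²}∘D_x + r·M_{xy}∘D_y − p·M_x`. -/
def W2 (r p : ℕ) : Module.End ℂ R2 :=
  Mf (Xv ^ 2) * Dx + (r : ℂ) • (Mf (Xv * Yv) * Dy) - (p : ℂ) • Mf Xv

/-- `W³ = M_x∘D_x − (p/2)·id`. -/
def W3 (p : ℕ) : Module.End ℂ R2 := Mf Xv * Dx - ((p : ℂ) / 2) • 1

/-- `W⁴ = M_y∘D_y`. -/
def W4 : Module.End ℂ R2 := Mf Yv * Dy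

/-- `W^{5+i} = M_{xⁱ}∘D_y`. -/
def W5i (i : ℕ) : Module.End ℂ R2 := Mf (Xv ^ i) * Dy

/-- The generating set `{W¹, …, W^{5+r}}` of the realization `𝔤^{24,r}_p`. -/
def Wset (r p : ℕ) : Set (Module.End ℂ R2) :=
  {W1, W2 r p, W3 p, W4} ∪ {T | ∃ i ≤ r, T = W5i i}

/-- The staircase index set `{(i,j) : i + r·j ≤ p, j ≤ q}`. -/
def sIdx (r p q : ℕ) : Finset (ℕ × ℕ) :=
  (Finset.range (p + 1) ×ˢ Finset.range (q + 1)).filter (fun ij => ij.1 + r * ij.2 ≤ p)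

namespace StairAux

/-- The exponent finsupp of `x^a y^b`. -/
def sg (a b : ℕ) : Fin 2 →₀ ℕ := Finsupp.single 0 a + Finsupp.single 1 b

@[simp] lemma sg_apply0 (a b : ℕ) : sg a b 0 = a := by
  simp [sg, Finsupp.single_apply]

@[simp] lemma sg_apply1 (a b : ℕ) : sg a b 1 = b := by
  simp [sg, Finsupp.single_apply]

lemma sg_eq (m : Fin 2 →₀ ℕ) : m = sg (m 0) (m 1) := by
  ext x
  fin_cases x <;> simp [sg, Finsupp.single_apply]

lemma XY_pow (a b : ℕ) : (Xv ^ a * Yv ^ b : R2) = monomial (sg a b) (1 : ℂ) := by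
  rw [Xv, Yv, X_pow_eq_monomial, X_pow_eq_monomial, monomial_mul, one_mul, sg]

lemma sg_sub0 (a b : ℕ) : sg a b - Finsupp.single 0 1 = sg (a - 1) b := by
  ext x
  fin_cases x <;> simp [sg, Finsupp.single_apply]

lemma sg_sub1 (a b : ℕ) : sg a b - Finsupp.single 1 1 = sg a (b - 1) := by
  ext x
  fin_cases x <;> simp [sg, Finsupp.single_apply]

lemma Dy_apply (t : Fin 2 →₀ ℕ) (c : ℂ) :
    Dy (monomial t c) = monomial (t - Finsupp.single 1 1) (c * t 1) := by
  simp [Dy, pderiv_monomial]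

lemma Dx_apply (t : Fin 2 →₀ ℕ) (c : ℂ) :
    Dx (monomial t c) = monomial (t - Finsupp.single 0 1) (c * t 0) := by
  simp [Dx, pderiv_monomial]

lemma Dy_pow (j a b : ℕ) (c : ℂ) :
    (Dy ^ j) (monomial (sg a b) c) = monomial (sg a (b - j)) (c * (b.descFactorial j : ℂ)) := by
  induction j with
  | zero => simp
  | succ j ih =>
    rw [pow_succ', Module.End.mul_apply, ih, Dy_apply, sg_sub1, sg_apply1,
      Nat.sub_sub, Nat.descFactorial_succ]
    push_cast
    ring_nf

lemma Dx_pow (i a b : ℕ) (c : ℂ) :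
    (Dx ^ i) (monomial (sg a b) c) = monomial (sg (a - i) b) (c * (a.descFactorial i : ℂ)) := by
  induction i with
  | zero => simp
  | succ i ih =>
    rw [pow_succ', Module.End.mul_apply, ih, Dx_apply, sg_sub0, sg_apply0,
      Nat.sub_sub, Nat.descFactorial_succ]
    push_cast
    ring_nf

lemma term_apply (g : R2) (i j a b : ℕ) :
    (Mf g * Dx ^ i * Dy ^ j) (Xv ^ a * Yv ^ b) =
      g * monomial (sg (a - i) (b - j)) ((a.descFactorial i * b.descFactorial j : ℕ) : ℂ) := by
  rw [XY_pow, Module.End.mul_apply, Module.End.mul_apply, Dy_pow, Dx_pow, Mf,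
    LinearMap.mulLeft_apply, one_mul]
  push_cast
  ring_nf

end StairAux
namespace StairAux

/-- Submodule of polynomials supported on monomials satisfying `pred`. -/
def suppSub (pred : (Fin 2 →₀ ℕ) → Prop) : Submodule ℂ R2 where
  carrier := {P | ∀ m, ¬ pred m → coeff m P = 0}
  add_mem' := by
    intro a b ha hb m hm
    rw [coeff_add, ha m hm, hb m hm, add_zero]
  zero_mem' := by
    intro m _
    simp
  smul_mem' := by
    intro c a ha m hm
    rw [coeff_smul, ha m hm, smul_zero]

lemma span_supp {S : Set R2} {pred : (Fin 2 →₀ ℕ) → Prop}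
    (h : ∀ P ∈ S, ∀ m, ¬ pred m → coeff m P = 0) :
    ∀ v ∈ Submodule.span ℂ S, ∀ m, ¬ pred m → coeff m v = 0 := by
  intro v hv
  have : Submodule.span ℂ S ≤ suppSub pred := Submodule.span_le.mpr (fun P hP => h P hP)
  exact this hv

lemma sg_le (A B : ℕ) (m : Fin 2 →₀ ℕ) : sg A B ≤ m ↔ A ≤ m 0 ∧ B ≤ m 1 := by
  constructor
  · intro h
    exact ⟨by simpa using h 0, by simpa using h 1⟩
  · intro ⟨h0, h1⟩ x
    fin_cases x
    · simpa using h0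
    · simpa using h1

lemma sg_sub (m : Fin 2 →₀ ℕ) (A B : ℕ) : m - sg A B = sg (m 0 - A) (m 1 - B) := by
  ext x
  fin_cases x <;> simp [Finsupp.tsub_apply]

lemma mem_Smod {r p q a b : ℕ} (h1 : a + r * b ≤ p) (h2 : b ≤ q) :
    (Xv ^ a * Yv ^ b : R2) ∈ Smod r p q :=
  Submodule.subset_span ⟨a, b, h1, h2, rfl⟩

lemma Smod_supp {r p q : ℕ} {v : R2} (hv : v ∈ Smod r p q) :
    ∀ m : Fin 2 →₀ ℕ, ¬ (m 0 + r * m 1 ≤ p ∧ m 1 ≤ q) → coeff m v = 0 := by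
  refine span_supp ?_ v hv
  rintro P ⟨i, j, h1, h2, rfl⟩ m hm
  rw [XY_pow, coeff_monomial]
  rw [if_neg]
  rintro rfl
  exact hm (by simpa using ⟨h1, h2⟩)

end StairAux
namespace StairAux

/-- The master coefficient formula for `T` applied to a monomial. -/
lemma coeffT (r p : ℕ) (f : ℕ × ℕ → R2) (T : Module.End ℂ R2)
    (hT : T = ∑ ij ∈ sIdx r p (p / r), Mf (f ij) * Dx ^ ij.1 * Dy ^ ij.2)
    (a b : ℕ) (m : Fin 2 →₀ ℕ) :
    coeff m (T (Xv ^ a * Yv ^ b)) =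
      ∑ ij ∈ sIdx r p (p / r),
        (if sg (a - ij.1) (b - ij.2) ≤ m then
          coeff (m - sg (a - ij.1) (b - ij.2)) (f ij) *
            ((a.descFactorial ij.1 * b.descFactorial ij.2 : ℕ) : ℂ)
        else 0) := by
  subst hT
  rw [LinearMap.sum_apply, coeff_sum]
  refine Finset.sum_congr rfl (fun ij _ => ?_)
  rw [term_apply, coeff_mul_monomial']

lemma exists_mono_ne_zero {T : Module.End ℂ R2} (hT0 : T ≠ 0) :
    ∃ a b : ℕ, T (Xv ^ a * Yv ^ b) ≠ 0 := by
  by_contra h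
  push_neg at h
  apply hT0
  refine LinearMap.ext fun v => ?_
  rw [LinearMap.zero_apply]
  have hv : v = ∑ m ∈ v.support, monomial m (coeff m v) :=
    (support_sum_monomial_coeff v).symm
  rw [hv, map_sum]
  refine Finset.sum_eq_zero (fun m _ => ?_)
  have : (monomial m (coeff m v) : R2) = coeff m v • (Xv ^ (m 0) * Yv ^ (m 1)) := by
    rw [XY_pow, smul_monomial, smul_eq_mul, mul_one, ← sg_eq]
  rw [this, map_smul, h (m 0) (m 1), smul_zero]

end StairAux
namespace StairAux

lemma mem_sIdx {r p q i j : ℕ} : (i, j) ∈ sIdx r p q ↔ i + r * j ≤ p ∧ j ≤ q ∧ i ≤ p := by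
  simp only [sIdx, Finset.mem_filter, Finset.mem_product, Finset.mem_range]
  omega

lemma exists_good (r p k : ℕ) (f : ℕ × ℕ → R2) (T : Module.End ℂ R2)
    (hT : T = ∑ ij ∈ sIdx r p (p / r), Mf (f ij) * Dx ^ ij.1 * Dy ^ ij.2)
    (hord : ∀ ij : ℕ × ℕ, k < ij.1 + ij.2 → f ij = 0)
    (hT0 : T ≠ 0) (d : ℤ)
    (hd : ∀ a b : ℕ, T (Xv ^ a * Yv ^ b) ∈ Submodule.span ℂ
      {P : R2 | ∃ c e : ℕ, (c : ℤ) + r * e = (a : ℤ) + r * b + d ∧ P = Xv ^ c * Yv ^ e}) :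
    ∃ i j c e : ℕ, (i, j) ∈ sIdx r p (p / r) ∧ i + j ≤ k ∧
      coeff (sg c e) (f (i, j)) ≠ 0 ∧ (c : ℤ) + r * e = d + i + r * j := by
  obtain ⟨a, b, hab⟩ := exists_mono_ne_zero hT0
  obtain ⟨m, hm⟩ := ne_zero_iff.mp hab
  have hw : (m 0 : ℤ) + r * m 1 = a + r * b + d := by
    by_contra hw
    exact hm (span_supp (pred := fun m' => (m' 0 : ℤ) + r * m' 1 = a + r * b + d)
      (by
        rintro P ⟨c, e, hce, rfl⟩ m' hm'
        rw [XY_pow, coeff_monomial, if_neg]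
        rintro rfl
        exact hm' (by simpa using hce)) _ (hd a b) m hw)
  rw [coeffT r p f T hT] at hm
  obtain ⟨⟨i, j⟩, hijmem, hij⟩ := Finset.exists_ne_zero_of_sum_ne_zero hm
  by_cases hle : sg (a - i) (b - j) ≤ m
  swap
  · rw [if_neg hle] at hij; exact absurd rfl hij
  rw [if_pos hle] at hij
  have h1 : coeff (m - sg (a - i) (b - j)) (f (i, j)) ≠ 0 := fun h => hij (by rw [h, zero_mul])
  have h2 : a.descFactorial i * b.descFactorial j ≠ 0 := by
    intro h
    apply hij
    rw [h, Nat.cast_zero, mul_zero]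
  have hia : i ≤ a := by
    by_contra h
    exact h2 (by rw [Nat.descFactorial_eq_zero_iff_lt (n:=a) (k:=i) |>.mpr (by omega), zero_mul])
  have hjb : j ≤ b := by
    by_contra h
    exact h2 (by rw [Nat.descFactorial_eq_zero_iff_lt (n:=b) (k:=j) |>.mpr (by omega), mul_zero])
  rw [sg_sub] at h1
  rw [sg_le] at hle
  have hfk : i + j ≤ k := by
    by_contra hk
    rw [hord (i, j) (by omega)] at h1
    simp at h1
  refine ⟨i, j, m 0 - (a - i), m 1 - (b - j), hijmem, hfk, h1, ?_⟩
  have hc : ((m 0 - (a - i) : ℕ) : ℤ) = (m 0 : ℤ) - a + i := by omega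
  have he : ((m 1 - (b - j) : ℕ) : ℤ) = (m 1 : ℤ) - b + j := by omega
  rw [hc, he]
  linear_combination hw

end StairAux

open StairAux

theorem stmt14 (r p k : ℕ) (hr : 2 ≤ r) (f : ℕ × ℕ → R2) (T : Module.End ℂ R2)
    (hT : T = ∑ ij ∈ sIdx r p (p / r), Mf (f ij) * Dx ^ ij.1 * Dy ^ ij.2)
    (hord : ∀ ij : ℕ × ℕ, k < ij.1 + ij.2 → f ij = 0)
    (hT0 : T ≠ 0)
    (hpres : ∀ v ∈ Smod r p (p / r), T v ∈ Smod r p (p / r))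
    (d : ℤ)
    (hd : ∀ a b : ℕ, T (Xv ^ a * Yv ^ b) ∈ Submodule.span ℂ
      {P : R2 | ∃ c e : ℕ, (c : ℤ) + r * e = (a : ℤ) + r * b + d ∧ P = Xv ^ c * Yv ^ e}) :
    -(k * r : ℤ) ≤ d ∧ d ≤ k := by
    classical
  obtain ⟨i₀, j₀', c₀, e₀, hmem₀, hk₀, hco₀, heq₀⟩ :=
    exists_good r p k f T hT hord hT0 d hd
  constructor
  · -- lower bound
    have h1 : i₀ + r * j₀' ≤ r * k := by
      calc i₀ + r * j₀' ≤ r * i₀ + r * j₀' := by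
            have : i₀ ≤ r * i₀ := Nat.le_mul_of_pos_left i₀ (by omega)
            omega
        _ = r * (i₀ + j₀') := by ring
        _ ≤ r * k := Nat.mul_le_mul_left r hk₀
    have h2 : ((i₀ : ℤ) + r * j₀') ≤ (r : ℤ) * k := by exact_mod_cast h1
    have h3 : (0 : ℤ) ≤ (c₀ : ℤ) + r * e₀ := by positivity
    have : -((r : ℤ) * k) ≤ d := by linarith
    linarith [this]
  · -- upper bound
    by_contra hdk
    push_neg at hdk
    -- hdk : (k : ℤ) < d
    have hex : ∃ j : ℕ, ∃ i c e : ℕ, (i, j) ∈ sIdx r p (p / r) ∧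
        coeff (sg c e) (f (i, j)) ≠ 0 ∧ (c : ℤ) + r * e = d + i + r * j :=
      ⟨j₀', i₀, c₀, e₀, hmem₀, hco₀, heq₀⟩
    set j₀ := Nat.find hex with hj₀def
    obtain ⟨i₁, c₁, e₁, hmem₁, hco₁, heq₁⟩ := Nat.find_spec hex
    set u : ℤ := (c₁ : ℤ) - i₁ with hu
    set v : ℤ := (e₁ : ℤ) - j₀ with hv
    have huv : u + r * v = d := by rw [hu, hv]; linear_combination heq₁
    set g : ℕ → ℕ → ℂ := fun i j =>
      if 0 ≤ (i : ℤ) + u ∧ 0 ≤ (j : ℤ) + v then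
        coeff (sg ((i : ℤ) + u).toNat ((j : ℤ) + v).toNat) (f (i, j))
      else 0 with hg
    have hj₀q : j₀ ≤ p / r := (mem_sIdx.mp hmem₁).2.1
    -- Step A: vanishing of the quadratic form on the outer staircase strip
    have stepA : ∀ a b : ℕ, a + r * b ≤ p → b ≤ p / r → (p : ℤ) < a + r * b + d →
        ∑ ij ∈ sIdx r p (p / r),
          g ij.1 ij.2 * (a.descFactorial ij.1 : ℂ) * (b.descFactorial ij.2 : ℂ) = 0 := by
      intro a b h1 h2 h3
      by_cases ha : 0 ≤ (a : ℤ) + u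
      swap
      · refine Finset.sum_eq_zero fun ij _ => ?_
        by_cases hdf : a.descFactorial ij.1 = 0
        · rw [hdf, Nat.cast_zero, mul_zero, zero_mul]
        · have hia : ij.1 ≤ a := by
            have := Nat.descFactorial_eq_zero_iff_lt (n := a) (k := ij.1)
            omega
          have hcond : ¬(0 ≤ (ij.1 : ℤ) + u ∧ 0 ≤ (ij.2 : ℤ) + v) := by
            rintro ⟨h', _⟩
            have : (ij.1 : ℤ) ≤ a := by exact_mod_cast hia
            omega
          simp only [hg]
          rw [if_neg hcond, zero_mul, zero_mul]
      by_cases hb : 0 ≤ (b : ℤ) + v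
      swap
      · refine Finset.sum_eq_zero fun ij _ => ?_
        by_cases hdf : b.descFactorial ij.2 = 0
        · rw [hdf, Nat.cast_zero, mul_zero]
        · have hjb : ij.2 ≤ b := by
            have := Nat.descFactorial_eq_zero_iff_lt (n := b) (k := ij.2)
            omega
          have hcond : ¬(0 ≤ (ij.1 : ℤ) + u ∧ 0 ≤ (ij.2 : ℤ) + v) := by
            rintro ⟨_, h'⟩
            have : (ij.2 : ℤ) ≤ b := by exact_mod_cast hjb
            omega
          simp only [hg]
          rw [if_neg hcond, zero_mul, zero_mul]
      · -- main case
        set ca := ((a : ℤ) + u).toNat with hca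
        set cb := ((b : ℤ) + v).toNat with hcb
        have h4 : (ca : ℤ) = (a : ℤ) + u := Int.toNat_of_nonneg ha
        have h5 : (cb : ℤ) = (b : ℤ) + v := Int.toNat_of_nonneg hb
        have hm0 : coeff (sg ca cb) (T (Xv ^ a * Yv ^ b)) = 0 := by
          apply Smod_supp (hpres _ (mem_Smod h1 h2))
          rintro ⟨hle, -⟩
          rw [sg_apply0, sg_apply1] at hle
          have hle' : (ca : ℤ) + r * cb ≤ p := by exact_mod_cast hle
          rw [h4, h5] at hle'
          have hexp : (a : ℤ) + u + r * ((b : ℤ) + v) = (a : ℤ) + r * b + d := by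
            linear_combination huv
          linarith
        rw [coeffT r p f T hT] at hm0
        rw [← hm0]
        refine Finset.sum_congr rfl fun ij _ => ?_
        obtain ⟨i, j⟩ := ij
        simp only
        by_cases hia : i ≤ a
        swap
        · have : a.descFactorial i = 0 := Nat.descFactorial_eq_zero_iff_lt.mpr (by omega)
          rw [this]
          simp
        by_cases hjb : j ≤ b
        swap
        · have : b.descFactorial j = 0 := Nat.descFactorial_eq_zero_iff_lt.mpr (by omega)
          rw [this]
          simp
        have hia' : (i : ℤ) ≤ a := by exact_mod_cast hia
        have hjb' : (j : ℤ) ≤ b := by exact_mod_cast hjb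
        have hc1 : sg (a - i) (b - j) ≤ sg ca cb ↔ (0 ≤ (i : ℤ) + u ∧ 0 ≤ (j : ℤ) + v) := by
          rw [sg_le, sg_apply0, sg_apply1]
          constructor
          · rintro ⟨hx, hy⟩
            constructor <;> omega
          · rintro ⟨hx, hy⟩
            constructor <;> omega
        by_cases hcond : 0 ≤ (i : ℤ) + u ∧ 0 ≤ (j : ℤ) + v
        · rw [if_pos (hc1.mpr hcond)]
          simp only [hg]
          rw [if_pos hcond]
          rw [sg_sub, sg_apply0, sg_apply1]
          have e1 : ca - (a - i) = ((i : ℤ) + u).toNat := by omega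
          have e2 : cb - (b - j) = ((j : ℤ) + v).toNat := by omega
          rw [e1, e2]
          push_cast
          ring
        · rw [if_neg (fun hh => hcond (hc1.mp hh))]
          simp only [hg]
          rw [if_neg hcond, zero_mul, zero_mul]
    -- rows with j < j₀ vanish
    have hrow : ∀ i j : ℕ, (i, j) ∈ sIdx r p (p / r) → j < j₀ → g i j = 0 := by
      intro i j hmem' hj
      by_contra hgne
      simp only [hg] at hgne
      by_cases hcond : 0 ≤ (i : ℤ) + u ∧ 0 ≤ (j : ℤ) + v
      · rw [if_pos hcond] at hgne
        refine Nat.find_min hex hj ⟨i, ((i : ℤ) + u).toNat, ((j : ℤ) + v).toNat, hmem', hgne, ?_⟩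
        have e1 : ((((i : ℤ) + u).toNat : ℤ)) = (i : ℤ) + u := Int.toNat_of_nonneg hcond.1
        have e2 : ((((j : ℤ) + v).toNat : ℤ)) = (j : ℤ) + v := Int.toNat_of_nonneg hcond.2
        rw [e1, e2]
        linear_combination huv
      · rw [if_neg hcond] at hgne
        exact hgne rfl
    -- g'
    set g' : ℕ → ℂ := fun i => if (i, j₀) ∈ sIdx r p (p / r) then g i j₀ else 0 with hg'
    have hg'i₁ : g' i₁ ≠ 0 := by
      simp only [hg']
      rw [if_pos hmem₁]
      simp only [hg]
      have hcu : (i₁ : ℤ) + u = c₁ := by rw [hu]; ring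
      have hcv : (j₀ : ℤ) + v = e₁ := by rw [hv]; ring
      rw [if_pos ⟨by omega, by omega⟩]
      have e1 : ((i₁ : ℤ) + u).toNat = c₁ := by omega
      have e2 : ((j₀ : ℤ) + v).toNat = e₁ := by omega
      rw [e1, e2]
      exact hco₁
    -- Step B: row extraction at b = j₀
    have stepB : ∀ a : ℕ,
        ∑ ij ∈ sIdx r p (p / r),
          g ij.1 ij.2 * (a.descFactorial ij.1 : ℂ) * ((j₀.descFactorial ij.2 : ℕ) : ℂ)
        = (j₀.factorial : ℂ) * ∑ i ∈ Finset.range (p + 1), g' i * (a.descFactorial i : ℂ) := by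
      intro a
      rw [sIdx, Finset.sum_filter, Finset.sum_product, Finset.mul_sum]
      refine Finset.sum_congr rfl fun i hi => ?_
      rw [Finset.sum_eq_single j₀]
      · simp only [hg']
        by_cases hmem' : (i, j₀) ∈ sIdx r p (p / r)
        · rw [if_pos ((mem_sIdx.mp hmem').1), if_pos hmem', Nat.descFactorial_self]
          ring
        · have : ¬ (i + r * j₀ ≤ p) := by
            intro hc
            exact hmem' (mem_sIdx.mpr ⟨hc, hj₀q, Nat.lt_succ_iff.mp (Finset.mem_range.mp hi)⟩)
          rw [if_neg this, if_neg hmem', zero_mul, mul_zero]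
      · intro j hjmem hjne
        rcases Nat.lt_or_ge j j₀ with hlt | hge
        · by_cases hpc : i + r * j ≤ p
          · rw [if_pos hpc, hrow i j (mem_sIdx.mpr ⟨hpc, Nat.lt_succ_iff.mp (Finset.mem_range.mp hjmem), Nat.lt_succ_iff.mp (Finset.mem_range.mp hi)⟩) hlt]
            ring
          · rw [if_neg hpc]
        · have hgt : j₀ < j := lt_of_le_of_ne hge (Ne.symm hjne)
          have : j₀.descFactorial j = 0 := Nat.descFactorial_eq_zero_iff_lt.mpr hgt
          rw [this]
          simp
      · intro habs
        exact absurd (Finset.mem_range.mpr (by omega)) habs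
    -- the polynomial
    set P : Polynomial ℂ :=
      ∑ i ∈ Finset.range (p + 1), Polynomial.C (g' i) * descPochhammer ℂ i with hP
    set Sset := (Finset.range (p + 1)).filter (fun i => g' i ≠ 0) with hSset
    have hi₁p : i₁ ≤ p := (mem_sIdx.mp hmem₁).2.2
    have hSne : Sset.Nonempty :=
      ⟨i₁, Finset.mem_filter.mpr ⟨Finset.mem_range.mpr (by omega), hg'i₁⟩⟩
    set I₀ := Sset.max' hSne with hI₀
    have hI₀mem : I₀ ∈ Sset := Sset.max'_mem hSne
    have hI₀g : g' I₀ ≠ 0 := (Finset.mem_filter.mp hI₀mem).2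
    have hI₀p : I₀ ≤ p :=
      Nat.lt_succ_iff.mp (Finset.mem_range.mp (Finset.mem_filter.mp hI₀mem).1)
    have hI₀max : ∀ i, g' i ≠ 0 → i ≤ p → i ≤ I₀ := fun i hgi hip =>
      Finset.le_max' _ i (Finset.mem_filter.mpr ⟨Finset.mem_range.mpr (by omega), hgi⟩)
    have hI₀sIdx : (I₀, j₀) ∈ sIdx r p (p / r) := by
      by_contra hmem'
      exact hI₀g (by simp only [hg']; rw [if_neg hmem'])
    have hfI₀ : f (I₀, j₀) ≠ 0 := by
      intro hf0
      apply hI₀g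
      simp only [hg']
      rw [if_pos hI₀sIdx]
      simp only [hg]
      split_ifs with hcond
      · rw [hf0, coeff_zero]
      · rfl
    have hI₀k : I₀ + j₀ ≤ k := by
      by_contra hc
      exact hfI₀ (hord (I₀, j₀) (by omega))
    have hI₀rj : I₀ + r * j₀ ≤ p := (mem_sIdx.mp hI₀sIdx).1
    have hdeg : P.natDegree ≤ I₀ := by
      rw [hP]
      refine Polynomial.natDegree_sum_le_of_forall_le _ _ fun i hi => ?_
      by_cases hgi : g' i = 0
      · rw [hgi]
        simp
      · have hiI : i ≤ I₀ := hI₀max i hgi (Nat.lt_succ_iff.mp (Finset.mem_range.mp hi))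
        refine le_trans (Polynomial.natDegree_C_mul_le _ _) ?_
        rw [descPochhammer_natDegree]
        exact hiI
    have hcoeffP : P.coeff I₀ = g' I₀ := by
      rw [hP, Polynomial.finset_sum_coeff]
      rw [Finset.sum_eq_single I₀]
      · rw [Polynomial.coeff_C_mul]
        have hmon := monic_descPochhammer ℂ I₀
        have hone : (descPochhammer ℂ I₀).coeff I₀ = 1 := by
          have hcn := hmon.coeff_natDegree
          rwa [descPochhammer_natDegree] at hcn
        rw [hone, mul_one]
      · intro i hi hne
        rcases Nat.lt_or_ge i I₀ with hlt | hge
        · refine Polynomial.coeff_eq_zero_of_natDegree_lt ?_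
          refine lt_of_le_of_lt (le_trans (Polynomial.natDegree_C_mul_le _ _) ?_) hlt
          rw [descPochhammer_natDegree]
        · have hgi : g' i = 0 := by
            by_contra hgi
            have := hI₀max i hgi (Nat.lt_succ_iff.mp (Finset.mem_range.mp hi))
            omega
          rw [hgi, map_zero, zero_mul, Polynomial.coeff_zero]
      · intro habs
        exact absurd (Finset.mem_range.mpr (by omega)) habs
    have hPne : P ≠ 0 := fun h => hI₀g (by rw [← hcoeffP, h, Polynomial.coeff_zero])
    have heval : ∀ a : ℕ, P.eval (a : ℂ) =
        ∑ i ∈ Finset.range (p + 1), g' i * (a.descFactorial i : ℂ) := by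
      intro a
      rw [hP, Polynomial.eval_finset_sum]
      refine Finset.sum_congr rfl fun i _ => ?_
      rw [Polynomial.eval_mul, Polynomial.eval_C, descPochhammer_eval_eq_descFactorial]
    set A := p - r * j₀ - I₀ with hA
    have hvan : ∀ t : ℕ, t ≤ I₀ → P.eval ((A + t : ℕ) : ℂ) = 0 := by
      intro t ht
      have h1 : (A + t) + r * j₀ ≤ p := by
        have h' := hI₀rj
        rw [hA]
        generalize r * j₀ = w at h' ⊢
        omega
      have hI₀d : (I₀ : ℤ) < d := by
        have : (I₀ : ℤ) ≤ k := by exact_mod_cast le_trans (Nat.le_add_right I₀ j₀) hI₀k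
        omega
      have h3 : (p : ℤ) < ((A + t : ℕ) : ℤ) + (r : ℤ) * (j₀ : ℤ) + d := by
        have hq2 : p ≤ (A + t) + r * j₀ + I₀ := by
          have h' := hI₀rj
          rw [hA]
          generalize r * j₀ = w at h' ⊢
          omega
        have hq3 : ((p : ℤ)) ≤ ((A + t : ℕ) : ℤ) + ((r * j₀ : ℕ) : ℤ) + (I₀ : ℤ) := by
          exact_mod_cast hq2
        push_cast at hq3 ⊢
        linarith
      have hS0 := stepA (A + t) j₀ h1 hj₀q h3
      rw [stepB] at hS0
      rw [heval]
      rcases mul_eq_zero.mp hS0 with h | h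
      · exact absurd h (by exact_mod_cast Nat.factorial_ne_zero j₀)
      · exact h
    have hcard : P.natDegree < Fintype.card (Fin (I₀ + 1)) := by
      rw [Fintype.card_fin]
      omega
    have hinj : Function.Injective (fun t : Fin (I₀ + 1) => ((A + (t : ℕ) : ℕ) : ℂ)) := by
      intro s t hst
      simp only [Nat.cast_inj] at hst
      exact Fin.ext (by omega)
    exact hPne (Polynomial.eq_zero_of_natDegree_lt_card_of_eval_eq_zero P hinj
      (fun t => hvan (t : ℕ) (Nat.lt_succ_iff.mp t.isLt)) hcard)
end
end
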